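/- arXiv:1711.06963 — 6 statements merged into one kernel-verified Lean document; each statement's English description precedes it below -/
import Mathlib

section
/- Let P be a (J⁺,J⁻) sign-pattern polyhedron in ℝⁿ defined by a rational matrix A ∈ ℚ^{m×n} and rational vector b ∈ ℚ^m. Then the original 1-row closure 1-𝒜(P) is contained in 2·𝒜(P), i.e., the aggregation closure is 2-approximated by the original 1-row closure. -/
open scoped Pointwise

/-- The constraint matrix of a `(J⁺,J⁻)` sign-pattern polyhedron: the nonnegative
rational matrix `A` with the columns in `J⁻` (i.e. outside `Jp`) negated, cast to `ℝ`. -/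
noncomputable def signedRow {m n : ℕ} (A : Matrix (Fin m) (Fin n) ℚ)
    (Jp : Finset (Fin n)) (i : Fin m) (j : Fin n) : ℝ :=
  if j ∈ Jp then (A i j : ℝ) else -(A i j : ℝ)

/-- The `(J⁺,J⁻)` sign-pattern polyhedron `P = {x ≥ 0 : Σ_{j∈J⁺} A_{ij} x_j − Σ_{j∈J⁻} A_{ij} x_j ≤ b_i ∀ i}`. -/
noncomputable def signPatternPoly {m n : ℕ} (A : Matrix (Fin m) (Fin n) ℚ) (b : Fin m → ℚ)
    (Jp : Finset (Fin n)) : Set (Fin n → ℝ) :=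
  {x | (∀ j, 0 ≤ x j) ∧ ∀ i, ∑ j, signedRow A Jp i j * x j ≤ (b i : ℝ)}

/-- `P^I(λ)`: the convex hull of the nonnegative integer points satisfying the
aggregated constraint `λᵀAx ≤ λᵀb`. -/
noncomputable def aggIntHull {m n : ℕ} (A : Matrix (Fin m) (Fin n) ℚ) (b : Fin m → ℚ)
    (Jp : Finset (Fin n)) (lam : Fin m → ℝ) : Set (Fin n → ℝ) :=
  convexHull ℝ {x | (∀ j, 0 ≤ x j) ∧ (∀ j, ∃ z : ℤ, x j = (z : ℝ)) ∧
    ∑ i, lam i * ∑ j, signedRow A Jp i j * x j ≤ ∑ i, lam i * (b i : ℝ)}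

/-- The aggregation closure `𝒜(P) = ∩_{λ ≥ 0} P^I(λ)`. -/
noncomputable def aggClosure {m n : ℕ} (A : Matrix (Fin m) (Fin n) ℚ) (b : Fin m → ℚ)
    (Jp : Finset (Fin n)) : Set (Fin n → ℝ) :=
  ⋂ lam ∈ {l : Fin m → ℝ | ∀ i, 0 ≤ l i}, aggIntHull A b Jp lam

/-- The original 1-row closure `1-𝒜(P) = ∩_{i∈[m]} P^I(e_i)`. -/
noncomputable def row1Closure {m n : ℕ} (A : Matrix (Fin m) (Fin n) ℚ) (b : Fin m → ℚ)
    (Jp : Finset (Fin n)) : Set (Fin n → ℝ) :=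
  ⋂ i : Fin m, aggIntHull A b Jp (Pi.single i 1)


/-!
Let `x` lie in the 1-row closure. Each single-row hull lies in its half-space, so `x ∈ P`; hence for
`λ ≥ 0` the aggregated row `σ = λᵀA` (columns of `J⁻` negated) and `d = λᵀb` satisfy `σ ⬝ᵥ x ≤ d`,
and the sign pattern gives `σ j ≤ d` for every `j`. It remains to show that every `u ≥ 0` with
`σ ⬝ᵥ u ≤ d / 2` lies in the convex hull of the knapsack set `S = {z ∈ ℤⁿ₊ : σ ⬝ᵥ z ≤ d}`.

Since `0 ∈ S`, the sets `t • conv S` grow with `t`, and a sum of points of `tᵢ • conv S` lies in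
`conv S` once `∑ tᵢ ≤ 1`. A coordinate with `σ j > 0` is paid for by the point
`⌊d / σ j⌋ • e j ∈ S`, whose `σ`-value exceeds `d / 2`, so positive mass of `σ`-value `G` costs at
most `G / μ` for some `μ > d / 2`. A coordinate with `σ j ≤ 0` is paid for by a carrier: `k • e j`
plus rounded-down multiples of a scaled copy of `u` on the positive coordinates, still a point of
`S`. The carriers absorb the positive mass balanced by the negative mass up to an error `O(1/k)`,
leaving `σ`-value at most `d / 2` to the positive points, so the total cost `d / (2μ) + O(1/k)` is
at most `1` for large `k`.
-/

open Finset Matrix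

section StarConvex

variable {E : Type*} [AddCommGroup E] [Module ℝ E] {s : Set E}

theorem Convex.sum_mem_sum_smul (hs : Convex ℝ s) (h0 : 0 ∈ s) {ι : Type*} (I : Finset ι)
    {t : ι → ℝ} {a : ι → E} (ht : ∀ i ∈ I, 0 ≤ t i) (ha : ∀ i ∈ I, a i ∈ t i • s) :
    ∑ i ∈ I, a i ∈ (∑ i ∈ I, t i) • s := by
  classical
  induction I using Finset.induction_on with
  | empty => simpa using Set.zero_mem_smul_set h0
  | insert i I hi ih =>
    rw [sum_insert hi, sum_insert hi,
      hs.add_smul (ht i (mem_insert_self i I)) (sum_nonneg fun j hj => ht j (mem_insert_of_mem hj))]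
    exact Set.add_mem_add (ha i (mem_insert_self i I))
      (ih (fun j hj => ht j (mem_insert_of_mem hj)) fun j hj => ha j (mem_insert_of_mem hj))

theorem Convex.smul_set_mono (hs : Convex ℝ s) (h0 : 0 ∈ s) {t t' : ℝ} (ht : 0 ≤ t)
    (htt' : t ≤ t') : t • s ⊆ t' • s := by
  rintro _ ⟨x, hx, rfl⟩
  rcases ht.eq_or_lt with rfl | ht
  · simpa using Set.zero_mem_smul_set h0
  · have ht' : t' ≠ 0 := (ht.trans_le htt').ne'
    refine ⟨(t / t') • x, hs.smul_mem_of_zero_mem h0 hx ⟨?_, ?_⟩, ?_⟩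
    · exact div_nonneg ht.le (ht.le.trans htt')
    · exact div_le_one_of_le₀ htt' (ht.le.trans htt')
    · simp only [smul_smul, mul_div_cancel₀ _ ht']

theorem Convex.add_mem_of_mem_smul (hs : Convex ℝ s) (h0 : 0 ∈ s) {t₁ t₂ : ℝ} (ht₁ : 0 ≤ t₁)
    (ht₂ : 0 ≤ t₂) (ht : t₁ + t₂ ≤ 1) {a b : E} (ha : a ∈ t₁ • s) (hb : b ∈ t₂ • s) :
    a + b ∈ s := by
  have hab : a + b ∈ (t₁ + t₂) • s := hs.add_smul ht₁ ht₂ ▸ Set.add_mem_add ha hb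
  simpa using hs.smul_set_mono h0 (add_nonneg ht₁ ht₂) ht hab

end StarConvex

theorem Finset.exists_lt_forall_le {ι : Type*} (s : Finset ι) (f : ι → ℝ) {a : ℝ}
    (h : ∀ i ∈ s, a < f i) : ∃ b, a < b ∧ ∀ i ∈ s, b ≤ f i := by
  rcases s.eq_empty_or_nonempty with rfl | hs
  · exact ⟨a + 1, by linarith, by simp⟩
  · exact ⟨s.inf' hs f, (lt_inf'_iff hs).2 h, fun i hi => inf'_le f hi⟩

theorem exists_pos_nat_div_le {C η : ℝ} (hC : 0 ≤ C) (hη : 0 < η) :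
    ∃ k : ℕ, 0 < k ∧ C / k ≤ η := by
  obtain ⟨k, hk⟩ := exists_nat_gt (C / η)
  have hk0 : (0 : ℝ) < k := (div_nonneg hC hη.le).trans_lt hk
  refine ⟨k, by exact_mod_cast hk0, ?_⟩
  rw [div_lt_iff₀ hη] at hk
  rw [div_le_iff₀ hk0]
  linarith

theorem one_le_floor_div {c d : ℝ} (hc : 0 < c) (hcd : c ≤ d) : 1 ≤ ⌊d / c⌋₊ :=
  Nat.le_floor (by rw [Nat.cast_one, one_le_div hc]; exact hcd)

theorem half_lt_mul_floor_div {c d : ℝ} (hc : 0 < c) (hcd : c ≤ d) :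
    d / 2 < c * ⌊d / c⌋₊ := by
  have h1 : (1 : ℝ) ≤ ⌊d / c⌋₊ := by exact_mod_cast one_le_floor_div hc hcd
  have h2 : d / c < ⌊d / c⌋₊ + 1 := Nat.lt_floor_add_one _
  rw [div_lt_iff₀ hc] at h2
  nlinarith

theorem mul_floor_div_le {c d : ℝ} (hc : 0 < c) (hd : 0 ≤ d) : c * ⌊d / c⌋₊ ≤ d := by
  calc c * ⌊d / c⌋₊ ≤ c * (d / c) := by gcongr; exact Nat.floor_le (div_nonneg hd hc.le)
    _ = d := mul_div_cancel₀ d hc.ne'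

theorem div_mul_floor_le {a y : ℝ} (ha : 0 ≤ a) (hy : 0 ≤ y) {k : ℕ} (hk : 0 < k) :
    a / k * ⌊k * y⌋₊ ≤ a * y := by
  calc a / k * ⌊k * y⌋₊ ≤ a / k * (k * y) := by gcongr; exact Nat.floor_le (by positivity)
    _ = a * y := by field_simp

theorem sub_div_le_div_mul_floor {a y : ℝ} (ha : 0 ≤ a) {k : ℕ} (hk : 0 < k) :
    a * y - a / k ≤ a / k * ⌊k * y⌋₊ := by
  calc a * y - a / k = a / k * (k * y - 1) := by field_simp
    _ ≤ a / k * ⌊k * y⌋₊ := by gcongr; linarith [Nat.lt_floor_add_one ((k : ℝ) * y)]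

theorem exists_balancing_scale {G R d : ℝ} (hG : 0 ≤ G) (hR : 0 ≤ R) (hGR : G - R ≤ d / 2)
    (hd : 0 ≤ d) : ∃ s : ℝ, 0 ≤ s ∧ s * G ≤ 1 ∧ s * R ≤ 1 ∧ G * (1 - s * R) ≤ d / 2 := by
  rcases le_or_gt G R with h | h
  · refine ⟨R⁻¹, inv_nonneg.2 hR, inv_mul_le_one_of_le₀ h hR, inv_mul_le_one_of_le₀ le_rfl hR, ?_⟩
    rcases hR.eq_or_lt with rfl | hR
    · simp only [le_antisymm h hG, zero_mul]; positivity
    · rw [inv_mul_cancel₀ hR.ne', sub_self, mul_zero]; positivity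
  · have hG0 : 0 < G := hR.trans_lt h
    refine ⟨G⁻¹, inv_nonneg.2 hG, inv_mul_le_one_of_le₀ le_rfl hG,
      inv_mul_le_one_of_le₀ h.le hG, ?_⟩
    rw [mul_sub, mul_one, ← mul_assoc, mul_inv_cancel₀ hG0.ne', one_mul]
    exact hGR

section Knapsack

variable {ι : Type*} [Fintype ι]

def knapsackSet (σ : ι → ℝ) (d : ℝ) : Set (ι → ℝ) :=
  {x | (∀ j, 0 ≤ x j) ∧ (∀ j, ∃ z : ℤ, x j = z) ∧ σ ⬝ᵥ x ≤ d}

noncomputable def carrier [DecidableEq ι] (σ x : ι → ℝ) (k : ℕ) (j : ι) : ι → ℕ :=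
  Pi.single j k + fun i => if 0 < σ i then ⌊k * (-σ j * x i)⌋₊ else 0

noncomputable def posMass (σ u : ι → ℝ) : ℝ :=
  ∑ j with 0 < σ j, σ j * u j

noncomputable def negMass (σ u : ι → ℝ) : ℝ :=
  ∑ j with ¬0 < σ j, -σ j * u j

/-- The part of coordinate `i` supplied by the carriers, the one at `j` taken with
weight `u j / k`. -/
noncomputable def carrierMass (σ u x : ι → ℝ) (k : ℕ) (i : ι) : ℝ :=
  ∑ j with ¬0 < σ j, u j / k * ⌊k * (-σ j * x i)⌋₊

variable {σ : ι → ℝ} {d : ℝ}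

theorem dotProduct_eq_posMass_sub_negMass (σ u : ι → ℝ) :
    σ ⬝ᵥ u = posMass σ u - negMass σ u := by
  simp only [negMass, neg_mul, sum_neg_distrib, sub_neg_eq_add, posMass,
    sum_filter_add_sum_filter_not]
  rfl

theorem posMass_nonneg {u : ι → ℝ} (hu : 0 ≤ u) : 0 ≤ posMass σ u :=
  sum_nonneg fun j hj => mul_nonneg (mem_filter.1 hj).2.le (hu j)

theorem negMass_nonneg {u : ι → ℝ} (hu : 0 ≤ u) : 0 ≤ negMass σ u :=
  sum_nonneg fun j hj => mul_nonneg (neg_nonneg.2 (not_lt.1 (mem_filter.1 hj).2)) (hu j)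

theorem natCast_mem_knapsackSet {z : ι → ℕ} (h : σ ⬝ᵥ (fun j => (z j : ℝ)) ≤ d) :
    (fun j => (z j : ℝ)) ∈ knapsackSet σ d :=
  ⟨fun _ => Nat.cast_nonneg _, fun j => ⟨z j, (Int.cast_natCast _).symm⟩, h⟩

theorem zero_mem_knapsackSet (hd : 0 ≤ d) : 0 ∈ knapsackSet σ d :=
  ⟨fun _ => le_rfl, fun _ => ⟨0, by simp⟩, by simpa using hd⟩

theorem convexHull_knapsackSet_subset :
    convexHull ℝ (knapsackSet σ d) ⊆ {x | 0 ≤ x ∧ σ ⬝ᵥ x ≤ d} :=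
  convexHull_min (fun _ hx => ⟨hx.1, hx.2.2⟩) <| (convex_Ici 0).inter <|
    convex_halfSpace_le ⟨dotProduct_add σ, fun c x => dotProduct_smul c σ x⟩ d

theorem single_mem_smul_convexHull_knapsackSet [DecidableEq ι] {j : ι} (hj : 0 < σ j)
    (hjd : σ j ≤ d) (a : ℝ) :
    Pi.single j a ∈ (a / ⌊d / σ j⌋₊) • convexHull ℝ (knapsackSet σ d) := by
  have hK : (0 : ℝ) < ⌊d / σ j⌋₊ := by exact_mod_cast one_le_floor_div hj hjd
  have hmem : (fun i => ((Pi.single j ⌊d / σ j⌋₊ : ι → ℕ) i : ℝ)) ∈ knapsackSet σ d := by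
    apply natCast_mem_knapsackSet
    simpa [Pi.single_apply, dotProduct] using mul_floor_div_le hj (hj.le.trans hjd)
  refine ⟨_, subset_convexHull ℝ _ hmem, ?_⟩
  ext i
  rcases eq_or_ne i j with rfl | h
  · simp [hK.ne']
  · simp [h]

theorem sum_single_mem_smul_convexHull_knapsackSet [DecidableEq ι] (hd : 0 ≤ d)
    (hσd : ∀ j, σ j ≤ d) {μ : ℝ} (hμ : 0 < μ) (hμK : ∀ j, 0 < σ j → μ ≤ σ j * ⌊d / σ j⌋₊)
    {v : ι → ℝ} (hv : 0 ≤ v) :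
    ∑ j with 0 < σ j, Pi.single j (v j) ∈
      (∑ j with 0 < σ j, σ j * v j / μ) • convexHull ℝ (knapsackSet σ d) := by
  have hH := convex_convexHull ℝ (knapsackSet σ d)
  have h0 := subset_convexHull ℝ _ (zero_mem_knapsackSet (σ := σ) hd)
  refine hH.sum_mem_sum_smul h0 _
    (fun j hj => div_nonneg (mul_nonneg (mem_filter.1 hj).2.le (hv j)) hμ.le) fun j hj => ?_
  have hj : 0 < σ j := (mem_filter.1 hj).2
  refine hH.smul_set_mono h0 (div_nonneg (hv j) (Nat.cast_nonneg _)) ?_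
    (single_mem_smul_convexHull_knapsackSet hj (hσd j) (v j))
  calc v j / ⌊d / σ j⌋₊ = σ j * v j / (σ j * ⌊d / σ j⌋₊) := (mul_div_mul_left _ _ hj.ne').symm
    _ ≤ σ j * v j / μ := div_le_div_of_nonneg_left (mul_nonneg hj.le (hv j)) hμ (hμK j hj)

theorem carrier_mem_knapsackSet [DecidableEq ι] (hd : 0 ≤ d) {x : ι → ℝ} (hx : 0 ≤ x)
    (hσx : ∑ i with 0 < σ i, σ i * x i ≤ 1) {j : ι} (hj : σ j ≤ 0) (k : ℕ) :
    (fun i => (carrier σ x k j i : ℝ)) ∈ knapsackSet σ d := by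
  apply natCast_mem_knapsackSet
  calc σ ⬝ᵥ (fun i => (carrier σ x k j i : ℝ))
      = σ j * k + ∑ i with 0 < σ i, σ i * ⌊k * (-σ j * x i)⌋₊ := by
        simp [carrier, dotProduct, mul_add, sum_add_distrib, Pi.single_apply, sum_filter]
    _ ≤ σ j * k + ∑ i with 0 < σ i, σ i * (k * (-σ j * x i)) := by
        gcongr with i hi
        · exact (mem_filter.1 hi).2.le
        · have : 0 ≤ -σ j * x i := mul_nonneg (neg_nonneg.2 hj) (hx i)
          exact Nat.floor_le (by positivity)
    _ = k * (-σ j) * (∑ i with 0 < σ i, σ i * x i - 1) := by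
        rw [mul_sub, mul_sum]; ring_nf
    _ ≤ d := (mul_nonpos_of_nonneg_of_nonpos (mul_nonneg (Nat.cast_nonneg _) (neg_nonneg.2 hj))
        (sub_nonpos.2 hσx)).trans hd

theorem sum_smul_carrier_mem_smul_convexHull_knapsackSet [DecidableEq ι] (hd : 0 ≤ d)
    {x : ι → ℝ} (hx : 0 ≤ x) (hσx : ∑ i with 0 < σ i, σ i * x i ≤ 1) {u : ι → ℝ} (hu : 0 ≤ u)
    (k : ℕ) :
    ∑ j with ¬0 < σ j, (u j / k) • (fun i => (carrier σ x k j i : ℝ)) ∈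
      (∑ j with ¬0 < σ j, u j / k) • convexHull ℝ (knapsackSet σ d) :=
  (convex_convexHull ℝ _).sum_mem_sum_smul (subset_convexHull ℝ _ (zero_mem_knapsackSet hd)) _
    (fun j _ => div_nonneg (hu j) (Nat.cast_nonneg _)) fun _ hj =>
      Set.smul_mem_smul_set <| subset_convexHull ℝ _ <|
        carrier_mem_knapsackSet hd hx hσx (not_lt.1 (mem_filter.1 hj).2) k

theorem sum_single_add_sum_smul_carrier [DecidableEq ι] (u x : ι → ℝ) {k : ℕ} (hk : k ≠ 0) :
    ∑ i with 0 < σ i, Pi.single i (u i - carrierMass σ u x k i) +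
      ∑ j with ¬0 < σ j, (u j / k) • (fun i => (carrier σ x k j i : ℝ)) = u := by
  ext i
  simp only [Finset.sum_apply, Pi.add_apply, Pi.smul_apply, smul_eq_mul, carrier, Pi.single_apply,
    Nat.cast_add, Nat.cast_ite, Nat.cast_zero, mul_add, sum_add_distrib]
  by_cases hi : 0 < σ i
  · simp [hi, carrierMass]
  · simp [hi, not_lt.1 hi, hk]

variable {u x : ι → ℝ} {k : ℕ}

theorem carrierMass_le (hu : 0 ≤ u) (hx : 0 ≤ x) (hk : 0 < k) (i : ι) :
    carrierMass σ u x k i ≤ negMass σ u * x i := by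
  rw [negMass, sum_mul]
  refine sum_le_sum fun j hj => ?_
  have hσj : 0 ≤ -σ j := neg_nonneg.2 (not_lt.1 (mem_filter.1 hj).2)
  calc u j / k * ⌊k * (-σ j * x i)⌋₊ ≤ u j * (-σ j * x i) :=
        div_mul_floor_le (hu j) (mul_nonneg hσj (hx i)) hk
    _ = -σ j * u j * x i := by ring

theorem sub_le_carrierMass (hu : 0 ≤ u) (hk : 0 < k) (i : ι) :
    negMass σ u * x i - (∑ j with ¬0 < σ j, u j) / k ≤ carrierMass σ u x k i := by
  rw [negMass, sum_mul, sum_div, ← sum_sub_distrib]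
  refine sum_le_sum fun j _ => ?_
  calc -σ j * u j * x i - u j / k = u j * (-σ j * x i) - u j / k := by ring
    _ ≤ u j / k * ⌊k * (-σ j * x i)⌋₊ := sub_div_le_div_mul_floor (hu j) hk

/-- The carriers are built from `s • u`; up to rounding they take over the fraction
`s * negMass σ u` of every positive coordinate. -/
theorem mem_convexHull_knapsackSet_of_scale (hd : 0 ≤ d) (hσd : ∀ j, σ j ≤ d)
    (hu : 0 ≤ u) {s μ : ℝ} (hs : 0 ≤ s) (hsPos : s * posMass σ u ≤ 1)
    (hsNeg : s * negMass σ u ≤ 1) (hμ : 0 < μ)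
    (hμK : ∀ j, 0 < σ j → μ ≤ σ j * ⌊d / σ j⌋₊) (hk : 0 < k)
    (hcost : posMass σ u * (1 - s * negMass σ u) / μ +
      (posMass σ 1 / μ + 1) * (∑ j with ¬0 < σ j, u j) / k ≤ 1) :
    u ∈ convexHull ℝ (knapsackSet σ d) := by
  classical
  set R := negMass σ u
  set V := ∑ j with ¬0 < σ j, u j
  set x : ι → ℝ := fun i => s * u i
  have hx : 0 ≤ x := fun i => mul_nonneg hs (hu i)
  have hσx : ∑ i with 0 < σ i, σ i * x i ≤ 1 := by
    simpa only [x, posMass, mul_left_comm _ s, ← mul_sum] using hsPos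
  set π : ι → ℝ := fun i => u i - carrierMass σ u x k i
  have hπ0 : 0 ≤ π := fun i => by
    have hRx : R * x i ≤ u i :=
      calc R * x i = s * R * u i := by ring
        _ ≤ 1 * u i := mul_le_mul_of_nonneg_right hsNeg (hu i)
        _ = u i := one_mul _
    show 0 ≤ u i - carrierMass σ u x k i
    linarith [carrierMass_le (σ := σ) hu hx hk i]
  have hπ : ∀ i, π i ≤ u i * (1 - s * R) + V / k := fun i => by
    have hRx : R * x i = u i * (s * R) := by ring
    show u i - carrierMass σ u x k i ≤ _
    linarith [sub_le_carrierMass (σ := σ) (x := x) hu hk i]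
  have hπcost : ∑ i with 0 < σ i, σ i * π i / μ + ∑ j with ¬0 < σ j, u j / k ≤ 1 := by
    calc ∑ i with 0 < σ i, σ i * π i / μ + ∑ j with ¬0 < σ j, u j / k
        ≤ ∑ i with 0 < σ i, σ i * (u i * (1 - s * R) + V / k) / μ + V / k := by
          refine add_le_add (sum_le_sum fun i hi => ?_) (sum_div _ _ _).symm.le
          have := (mem_filter.1 hi).2
          gcongr
          exact hπ i
      _ = posMass σ u * (1 - s * R) / μ + (posMass σ 1 / μ + 1) * V / k := by
          simp only [posMass, Pi.one_apply, mul_one, ← sum_div, mul_add, sum_add_distrib,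
            ← mul_assoc, ← sum_mul]
          ring
      _ ≤ 1 := hcost
  rw [← sum_single_add_sum_smul_carrier (σ := σ) u x hk.ne']
  exact (convex_convexHull ℝ _).add_mem_of_mem_smul
    (subset_convexHull ℝ _ (zero_mem_knapsackSet hd))
    (sum_nonneg fun i hi => div_nonneg (mul_nonneg (mem_filter.1 hi).2.le (hπ0 i)) hμ.le)
    (sum_nonneg fun j _ => div_nonneg (hu j) (Nat.cast_nonneg _)) hπcost
    (sum_single_mem_smul_convexHull_knapsackSet hd hσd hμ hμK hπ0)
    (sum_smul_carrier_mem_smul_convexHull_knapsackSet hd hx hσx hu k)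

theorem mem_convexHull_knapsackSet_of_dotProduct_le_half (hd : 0 ≤ d) (hσd : ∀ j, σ j ≤ d)
    (hu : 0 ≤ u) (hσu : σ ⬝ᵥ u ≤ d / 2) : u ∈ convexHull ℝ (knapsackSet σ d) := by
  have hGR : posMass σ u - negMass σ u ≤ d / 2 := dotProduct_eq_posMass_sub_negMass σ u ▸ hσu
  obtain ⟨s, hs, hsPos, hsNeg, hres⟩ :=
    exists_balancing_scale (posMass_nonneg hu) (negMass_nonneg hu) hGR hd
  obtain ⟨μ, hμ, hμK⟩ := (univ.filter fun j => 0 < σ j).exists_lt_forall_le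
    (fun j => σ j * ⌊d / σ j⌋₊) fun j hj => half_lt_mul_floor_div (mem_filter.1 hj).2 (hσd j)
  have hμ0 : 0 < μ := by linarith
  have hη : 0 < 1 - d / (2 * μ) := by
    rw [sub_pos, div_lt_one (by positivity)]; linarith
  have : 0 ≤ posMass σ 1 := posMass_nonneg zero_le_one
  obtain ⟨k, hk0, hk⟩ := exists_pos_nat_div_le
    (mul_nonneg (by positivity) (sum_nonneg fun j _ => hu j) : 0 ≤ (posMass σ 1 / μ + 1) * _) hη
  refine mem_convexHull_knapsackSet_of_scale hd hσd hu hs hsPos hsNeg hμ0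
    (fun j hj => hμK j (mem_filter.2 ⟨mem_univ j, hj⟩)) hk0 ?_
  calc posMass σ u * (1 - s * negMass σ u) / μ + (posMass σ 1 / μ + 1) * _ / k
      ≤ d / 2 / μ + (1 - d / (2 * μ)) := by gcongr
    _ = 1 := by field_simp; ring

end Knapsack

section SignPattern

variable {m n : ℕ} {A : Matrix (Fin m) (Fin n) ℚ} {b : Fin m → ℚ} {Jp : Finset (Fin n)}

theorem aggIntHull_eq_convexHull_knapsackSet (lam : Fin m → ℝ) :
    aggIntHull A b Jp lam = convexHull ℝ
      (knapsackSet (lam ᵥ* Matrix.of (signedRow A Jp)) (lam ⬝ᵥ fun i => (b i : ℝ))) := by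
  unfold knapsackSet
  simp_rw [← dotProduct_mulVec]
  rfl

theorem row1Closure_subset_signPatternPoly (hm : 0 < m) :
    row1Closure A b Jp ⊆ signPatternPoly A b Jp := by
  intro x hx
  have hrow : ∀ i, 0 ≤ x ∧ signedRow A Jp i ⬝ᵥ x ≤ b i := fun i => by
    have hxi := Set.mem_iInter.1 hx i
    rw [aggIntHull_eq_convexHull_knapsackSet] at hxi
    simpa [single_one_vecMul] using convexHull_knapsackSet_subset hxi
  exact ⟨(hrow ⟨0, hm⟩).1, fun i => (hrow i).2⟩

theorem signedRow_le (hA : ∀ i j, 0 ≤ A i j) (hb : ∀ i, 0 ≤ b i)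
    (hAb : ∀ i, ∀ j ∈ Jp, A i j ≤ b i) (i : Fin m) (j : Fin n) : signedRow A Jp i j ≤ b i := by
  unfold signedRow
  split_ifs with hj
  · exact_mod_cast hAb i j hj
  · have hAij : (0 : ℝ) ≤ A i j := by exact_mod_cast hA i j
    have hbi : (0 : ℝ) ≤ b i := by exact_mod_cast hb i
    linarith

end SignPattern

theorem row1Closure_subset_two_smul_aggClosure_general
    {m n : ℕ} (hm : 0 < m)
    (Jp : Finset (Fin n))
    (A : Matrix (Fin m) (Fin n) ℚ) (b : Fin m → ℚ)
    (hA : ∀ i j, 0 ≤ A i j) (hb : ∀ i, 0 ≤ b i)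
    (hAb : ∀ i, ∀ j ∈ Jp, A i j ≤ b i) :
    row1Closure A b Jp ⊆ (2 : ℝ) • aggClosure A b Jp := by
  intro x hx
  obtain ⟨hx0, hxA⟩ := row1Closure_subset_signPatternPoly hm hx
  rw [Set.mem_smul_set_iff_inv_smul_mem₀ two_ne_zero, aggClosure, Set.mem_iInter₂]
  intro lam hlam
  rw [aggIntHull_eq_convexHull_knapsackSet]
  have hlam' : 0 ≤ lam := hlam
  refine mem_convexHull_knapsackSet_of_dotProduct_le_half ?_ (fun j => ?_) ?_ ?_
  · exact dotProduct_nonneg_of_nonneg hlam' fun i => show (0 : ℝ) ≤ b i by exact_mod_cast hb i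
  · exact dotProduct_le_dotProduct_of_nonneg_left (fun i => signedRow_le hA hb hAb i j) hlam'
  · exact smul_nonneg (by norm_num) fun j => hx0 j
  · rw [dotProduct_smul, ← dotProduct_mulVec, smul_eq_mul, inv_mul_eq_div]
    gcongr
    exact dotProduct_le_dotProduct_of_nonneg_left hxA hlam'

/-- For a `(J⁺,J⁻)` sign-pattern polyhedron `P` with rational data,
`1-𝒜(P) ⊆ 2 · 𝒜(P)`: the aggregation closure is 2-approximated by the original 1-row closure. -/
theorem row1Closure_subset_two_smul_aggClosure
    {m n : ℕ} (hm : 0 < m) (hn : 0 < n)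
    (Jp Jn : Finset (Fin n)) (hdisj : Disjoint Jp Jn) (hunion : Jp ∪ Jn = Finset.univ)
    (A : Matrix (Fin m) (Fin n) ℚ) (b : Fin m → ℚ)
    (hA : ∀ i j, 0 ≤ A i j) (hb : ∀ i, 0 ≤ b i)
    (hAb : ∀ i, ∀ j ∈ Jp, A i j ≤ b i) :
    row1Closure A b Jp ⊆ (2 : ℝ) • aggClosure A b Jp :=
  row1Closure_subset_two_smul_aggClosure_general hm Jp A b hA hb hAb
end

section
/- For every real α ≥ 1 there exists a (J⁺,J⁻) sign-pattern polyhedron P (with rational data) such that 𝒜(P) is not contained in α·𝒜₂(P); that is, the aggregation closure can be an arbitrarily bad approximation of the 2-aggregation closure for sign-pattern polyhedra. -/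
/-!
Take `P = {x ≥ 0 : x₀ - K² x₁ ≤ 1, x₀ ≤ K + 1}` with `J⁺ = {0}`, `J⁻ = {1}` and `K > α + 2`.
Integer points of `P` satisfy the cut `x₀ - K x₁ ≤ 1` (by the first row if `x₁ = 0`, by the second
if `x₁ ≥ 1`), and aggregating with the two unit vectors keeps exactly these points, so the cut is
valid for `𝒜₂(P)`. The point `v = (K - 1, 1/K)` has `v₀ - K v₁ = K - 2 > α`, hence `v ∉ α 𝒜₂(P)`.
Yet `v` survives every single aggregation `λ`: it equals `(1 - 1/K) (a, 0) + (1/K) (c, 1)` whenever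
`(K - 1) a + c = K (K - 1)`, and integers of this kind satisfying the aggregated inequality exist:
`(a, c) = (K, 0)` if `λ₁ ≥ (K - 1) λ₀`, and otherwise `a = ⌊β⌋`, `c = (K - 1) (K - a)`, where `β` is
the largest `x₀` the aggregated inequality allows at `x₁ = 0`.
-/

open scoped Pointwise

/-- `P^I(λ₁,λ₂)`: the convex hull of the nonnegative integer points satisfying both
aggregated constraints `λ₁ᵀAx ≤ λ₁ᵀb` and `λ₂ᵀAx ≤ λ₂ᵀb`. -/
noncomputable def aggIntHull2 {m n : ℕ} (A : Matrix (Fin m) (Fin n) ℚ) (b : Fin m → ℚ)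
    (Jp : Finset (Fin n)) (l1 l2 : Fin m → ℝ) : Set (Fin n → ℝ) :=
  convexHull ℝ {x | (∀ j, 0 ≤ x j) ∧ (∀ j, ∃ z : ℤ, x j = (z : ℝ)) ∧
    (∑ i, l1 i * ∑ j, signedRow A Jp i j * x j ≤ ∑ i, l1 i * (b i : ℝ)) ∧
    (∑ i, l2 i * ∑ j, signedRow A Jp i j * x j ≤ ∑ i, l2 i * (b i : ℝ))}

/-- The 2-aggregation closure `𝒜₂(P) = ∩_{λ₁,λ₂ ≥ 0} P^I(λ₁,λ₂)`. -/
noncomputable def agg2Closure {m n : ℕ} (A : Matrix (Fin m) (Fin n) ℚ) (b : Fin m → ℚ)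
    (Jp : Finset (Fin n)) : Set (Fin n → ℝ) :=
  ⋂ l1 ∈ {l : Fin m → ℝ | ∀ i, 0 ≤ l i}, ⋂ l2 ∈ {l : Fin m → ℝ | ∀ i, 0 ≤ l i},
    aggIntHull2 A b Jp l1 l2

lemma exists_int_pair_aggregate_le {K : ℕ} (hK : 0 < K) {l₀ l₁ : ℝ} (hl₀ : 0 ≤ l₀) (hl₁ : 0 ≤ l₁) :
    ∃ a c : ℤ, 0 ≤ a ∧ 0 ≤ c ∧ ((K : ℝ) - 1) * a + c = K * (K - 1) ∧
      (l₀ + l₁) * a ≤ l₀ + l₁ * (K + 1) ∧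
      (l₀ + l₁) * c - l₀ * (K : ℝ) ^ 2 ≤ l₀ + l₁ * (K + 1) := by
  have hK' : (1 : ℝ) ≤ K := by exact_mod_cast hK
  rcases le_or_gt (((K : ℝ) - 1) * l₀) l₁ with hl | hl
  · refine ⟨K, 0, by positivity, le_rfl, by push_cast; ring, by push_cast; linarith, ?_⟩
    push_cast
    nlinarith
  have hT : 0 < l₀ + l₁ := by nlinarith
  set β := (l₀ + l₁ * (K + 1)) / (l₀ + l₁)
  have hβ_mul : (l₀ + l₁) * β = l₀ + l₁ * (K + 1) := mul_div_cancel₀ _ hT.ne'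
  have hβ_lt : β < K := by rw [div_lt_iff₀ hT]; nlinarith
  have ha₀ : (1 : ℤ) ≤ ⌊β⌋ := Int.le_floor.mpr (by rw [Int.cast_one, le_div_iff₀ hT]; nlinarith)
  have haK : ⌊β⌋ < K := Int.floor_lt.mpr (by exact_mod_cast hβ_lt)
  have hfloor_le := Int.floor_le β
  have hlt_floor := Int.lt_floor_add_one β
  refine ⟨⌊β⌋, (K - 1) * (K - ⌊β⌋), by omega, mul_nonneg (by omega) (by omega),
    by push_cast; ring, by nlinarith, ?_⟩
  -- `(l₀ + l₁) (K - ⌊β⌋) < (l₀ + l₁) (K + 1 - β) = l₀ K`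
  have hgap : (l₀ + l₁) * (K - ⌊β⌋) ≤ l₀ * K := by nlinarith
  have hK_sub : (0 : ℝ) ≤ K - 1 := by linarith
  push_cast
  nlinarith [mul_le_mul_of_nonneg_left hgap hK_sub]

def gapMatrix (K : ℕ) : Matrix (Fin 2) (Fin 2) ℚ := !![1, (K : ℚ) ^ 2; 1, 0]

def gapRhs (K : ℕ) : Fin 2 → ℚ := ![1, (K : ℚ) + 1]

noncomputable def gapPoint (K : ℕ) : Fin 2 → ℝ := ![(K : ℝ) - 1, 1 / (K : ℝ)]

section gap

variable (K : ℕ)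

lemma sum_lam_mul_signedRow_gapMatrix (lam x : Fin 2 → ℝ) :
    ∑ i, lam i * ∑ j, signedRow (gapMatrix K) {0} i j * x j
      = (lam 0 + lam 1) * x 0 - lam 0 * (K : ℝ) ^ 2 * x 1 := by
  simp only [signedRow, gapMatrix, Finset.mem_singleton, Fin.sum_univ_two, Matrix.of_apply,
    Matrix.cons_val', Matrix.cons_val_fin_one, Matrix.cons_val_zero, Matrix.cons_val_one,
    one_ne_zero, ↓reduceIte, Rat.cast_one, Rat.cast_pow, Rat.cast_natCast, Rat.cast_zero]
  ring

lemma sum_lam_mul_gapRhs (lam : Fin 2 → ℝ) :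
    ∑ i, lam i * (gapRhs K i : ℝ) = lam 0 + lam 1 * ((K : ℝ) + 1) := by
  simp [Fin.sum_univ_two, gapRhs]

lemma mem_aggIntHull_gap_of_int {lam : Fin 2 → ℝ} {a c : ℤ} (ha : 0 ≤ a) (hc : 0 ≤ c)
    (h : (lam 0 + lam 1) * a - lam 0 * (K : ℝ) ^ 2 * c ≤ lam 0 + lam 1 * ((K : ℝ) + 1)) :
    ![(a : ℝ), (c : ℝ)] ∈ aggIntHull (gapMatrix K) (gapRhs K) {0} lam := by
  refine subset_convexHull ℝ _ ⟨?_, ?_, ?_⟩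
  · intro j; fin_cases j <;> simpa
  · intro j; fin_cases j
    exacts [⟨a, rfl⟩, ⟨c, rfl⟩]
  · rwa [sum_lam_mul_signedRow_gapMatrix, sum_lam_mul_gapRhs]

lemma gapPoint_mem_aggIntHull (hK : 0 < K) {lam : Fin 2 → ℝ} (hlam : ∀ i, 0 ≤ lam i) :
    gapPoint K ∈ aggIntHull (gapMatrix K) (gapRhs K) {0} lam := by
  obtain ⟨a, c, ha, hc, hac, hbase, htop⟩ := exists_int_pair_aggregate_le hK (hlam 0) (hlam 1)
  have hK' : (1 : ℝ) ≤ K := by exact_mod_cast hK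
  have hbase_mem := mem_aggIntHull_gap_of_int K ha le_rfl (by push_cast; linarith)
  have htop_mem := mem_aggIntHull_gap_of_int K hc zero_le_one (by push_cast; linarith)
  have hcomb : (1 - 1 / (K : ℝ)) • ![(a : ℝ), ((0 : ℤ) : ℝ)] +
      (1 / (K : ℝ)) • ![(c : ℝ), ((1 : ℤ) : ℝ)] = gapPoint K := by
    ext j; fin_cases j
    · show (1 - 1 / (K : ℝ)) * a + 1 / K * c = K - 1
      field_simp
      linarith
    · show (1 - 1 / (K : ℝ)) * ((0 : ℤ) : ℝ) + 1 / K * ((1 : ℤ) : ℝ) = 1 / K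
      simp
  exact hcomb ▸ convex_convexHull ℝ _ hbase_mem htop_mem
    (by rw [sub_nonneg, div_le_one (by linarith)]; exact hK') (by positivity) (by ring)

lemma aggIntHull2_gap_subset :
    aggIntHull2 (gapMatrix K) (gapRhs K) {0} ![1, 0] ![0, 1] ⊆ {x | x 0 - K * x 1 ≤ 1} := by
  have hconv : Convex ℝ {x : Fin 2 → ℝ | x 0 - K * x 1 ≤ 1} :=
    convex_halfSpace_le ⟨fun x y ↦ by simp only [Pi.add_apply]; ring,
      fun r x ↦ by simp only [Pi.smul_apply, smul_eq_mul]; ring⟩ 1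
  refine convexHull_min ?_ hconv
  rintro x ⟨hx_nonneg, hx_int, hrow₀, hrow₁⟩
  simp only [sum_lam_mul_signedRow_gapMatrix, sum_lam_mul_gapRhs, Matrix.cons_val_zero,
    Matrix.cons_val_one] at hrow₀ hrow₁
  obtain ⟨z, hz⟩ := hx_int 1
  have hz_nonneg : 0 ≤ z := by exact_mod_cast hz ▸ hx_nonneg 1
  show x 0 - K * x 1 ≤ 1
  rcases hz_nonneg.eq_or_lt with hz₀ | hz₁
  · have hx₁ : x 1 = 0 := by rw [hz, ← hz₀, Int.cast_zero]
    rw [hx₁] at hrow₀ ⊢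
    linarith
  · have hx₁ : 1 ≤ x 1 := by rw [hz]; exact_mod_cast hz₁
    nlinarith

lemma gapPoint_mem_aggClosure (hK : 0 < K) :
    gapPoint K ∈ aggClosure (gapMatrix K) (gapRhs K) {0} :=
  Set.mem_iInter₂.mpr fun _ hlam ↦ gapPoint_mem_aggIntHull K hK hlam

lemma gapPoint_notMem_smul_agg2Closure {α : ℝ} (hα : 0 < α) (hK : α + 2 < K) :
    gapPoint K ∉ α • agg2Closure (gapMatrix K) (gapRhs K) {0} := by
  rintro ⟨w, hw, hvw⟩
  have hw₂ : w ∈ aggIntHull2 (gapMatrix K) (gapRhs K) {0} ![1, 0] ![0, 1] :=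
    Set.mem_iInter₂.mp (Set.mem_iInter₂.mp hw _ (by simp [Fin.forall_fin_two])) _
      (by simp [Fin.forall_fin_two])
  have hcut : w 0 - K * w 1 ≤ 1 := aggIntHull2_gap_subset K hw₂
  have hK₀ : (K : ℝ) ≠ 0 := by linarith
  have hv₀ : α * w 0 = K - 1 := congrFun hvw 0
  have hv₁ : α * w 1 = 1 / K := congrFun hvw 1
  have hscaled : α * (w 0 - K * w 1) = K - 2 := by
    rw [mul_sub, hv₀, mul_left_comm, hv₁]; field_simp; ring
  nlinarith

end gap

/-- For every `α ≥ 1` there is a `(J⁺,J⁻)` sign-pattern polyhedron `P`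
(with rational data) such that `𝒜(P) ⊄ α · 𝒜₂(P)`: the aggregation closure can be an
arbitrarily bad approximation of the 2-aggregation closure. -/
theorem exists_signPattern_aggClosure_not_subset_smul_agg2Closure
    (α : ℝ) (hα : 1 ≤ α) :
    ∃ (m n : ℕ) (Jp Jn : Finset (Fin n)) (A : Matrix (Fin m) (Fin n) ℚ) (b : Fin m → ℚ),
      0 < m ∧ 0 < n ∧ Disjoint Jp Jn ∧ Jp ∪ Jn = Finset.univ ∧
      (∀ i j, 0 ≤ A i j) ∧ (∀ i, 0 ≤ b i) ∧ (∀ i, ∀ j ∈ Jp, A i j ≤ b i) ∧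
      ¬ (aggClosure A b Jp ⊆ α • agg2Closure A b Jp) := by
  obtain ⟨K, hK⟩ := exists_nat_gt (α + 2)
  have hK₀ : 0 < K := by exact_mod_cast (show (0 : ℝ) < K by linarith)
  refine ⟨2, 2, {0}, {1}, gapMatrix K, gapRhs K, two_pos, two_pos, by decide, by decide,
    ?_, ?_, ?_, fun hsub ↦ gapPoint_notMem_smul_agg2Closure K (by linarith) hK
      (hsub (gapPoint_mem_aggClosure K hK₀))⟩
  · intro i j; fin_cases i <;> fin_cases j <;> simp [gapMatrix]
  · intro i; fin_cases i <;> simp [gapRhs]; positivity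
  · intro i j hj
    rw [Finset.mem_singleton.mp hj]
    fin_cases i <;> simp [gapMatrix, gapRhs]
end

section
/- Let P = {x ∈ ℝⁿ_+ : Ax ≤ b} be a packing polyhedron with rational data, i.e., A_{ij} ≥ 0, b_i ≥ 0 and A_{ij} ≤ b_i for all i ∈ [m], j ∈ [n]. Then 𝒜(P) ⊆ 3·𝒜₂(P): the aggregation closure of a packing polyhedron is contained in 3 times its 2-aggregation closure. -/
open scoped Pointwise

/-- `P^I(λ)` for a packing system `Ax ≤ b, x ≥ 0`: the convex hull of the nonnegative
integer points satisfying the aggregated constraint `λᵀAx ≤ λᵀb`. -/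
noncomputable def packAggIntHull {m n : ℕ} (A : Matrix (Fin m) (Fin n) ℚ) (b : Fin m → ℚ)
    (lam : Fin m → ℝ) : Set (Fin n → ℝ) :=
  convexHull ℝ {x | (∀ j, 0 ≤ x j) ∧ (∀ j, ∃ z : ℤ, x j = (z : ℝ)) ∧
    ∑ i, lam i * ∑ j, (A i j : ℝ) * x j ≤ ∑ i, lam i * (b i : ℝ)}

/-- `P^I(λ₁,λ₂)` for a packing system. -/
noncomputable def packAggIntHull2 {m n : ℕ} (A : Matrix (Fin m) (Fin n) ℚ) (b : Fin m → ℚ)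
    (l1 l2 : Fin m → ℝ) : Set (Fin n → ℝ) :=
  convexHull ℝ {x | (∀ j, 0 ≤ x j) ∧ (∀ j, ∃ z : ℤ, x j = (z : ℝ)) ∧
    (∑ i, l1 i * ∑ j, (A i j : ℝ) * x j ≤ ∑ i, l1 i * (b i : ℝ)) ∧
    (∑ i, l2 i * ∑ j, (A i j : ℝ) * x j ≤ ∑ i, l2 i * (b i : ℝ))}

/-- The aggregation closure `𝒜(P) = ∩_{λ ≥ 0} P^I(λ)` of a packing polyhedron. -/
noncomputable def packAggClosure {m n : ℕ} (A : Matrix (Fin m) (Fin n) ℚ) (b : Fin m → ℚ) :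
    Set (Fin n → ℝ) :=
  ⋂ lam ∈ {l : Fin m → ℝ | ∀ i, 0 ≤ l i}, packAggIntHull A b lam

/-- The 2-aggregation closure `𝒜₂(P) = ∩_{λ₁,λ₂ ≥ 0} P^I(λ₁,λ₂)` of a packing polyhedron. -/
noncomputable def packAgg2Closure {m n : ℕ} (A : Matrix (Fin m) (Fin n) ℚ) (b : Fin m → ℚ) :
    Set (Fin n → ℝ) :=
  ⋂ l1 ∈ {l : Fin m → ℝ | ∀ i, 0 ≤ l i}, ⋂ l2 ∈ {l : Fin m → ℝ | ∀ i, 0 ≤ l i},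
    packAggIntHull2 A b l1 l2

/-!
Aggregating `Ax ≤ b` with two nonnegative multipliers `λ₁, λ₂` gives a packing polyhedron `Q`
with two rows, and `𝒜(P) ⊆ Q`. Every point of `Q` is a convex combination of points of `Q` with
at most two fractional coordinates `p, q`, and for such a point
`v / 3 = (⌊v⌋ + fract(v_p) e_p + fract(v_q) e_q) / 3` is a subconvex combination of the integer
points `⌊v⌋, e_p, e_q` of `Q`; as `0 ∈ Q`, it lies in `P^I(λ₁, λ₂) = conv (Q ∩ ℤⁿ)`.
The same argument puts a packing polyhedron with `k` rows inside `k + 1` times its integer hull.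
-/

open Matrix Finset

theorem Matrix.exists_ne_zero_mulVec_eq_zero_of_card_lt {K ι σ : Type*} [Field K] [Fintype ι]
    [Fintype σ] (C : Matrix ι σ K) (s : Finset σ) (hs : Fintype.card ι < #s) :
    ∃ w ≠ 0, (∀ j ∉ s, w j = 0) ∧ C *ᵥ w = 0 := by
  classical
  let f := C.mulVecLin.prod (LinearMap.funLeft K K ((↑) : {j // j ∉ s} → σ))
  have hdim : Module.finrank K ((ι → K) × ({j // j ∉ s} → K)) < Module.finrank K (σ → K) := by
    simp only [Module.finrank_prod, Module.finrank_fintype_fun_eq_card,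
      Fintype.card_subtype_compl, Fintype.card_coe]
    have := s.card_le_univ
    omega
  obtain ⟨w, hw, hw0⟩ := (Submodule.ne_bot_iff _).mp (f.ker_ne_bot_of_finrank_lt hdim)
  exact ⟨w, hw0, fun j hj => congrFun (congrArg Prod.snd hw) ⟨j, hj⟩, congrArg Prod.fst hw⟩

/-- The time `t` at which `a + t * r` reaches `⌊a⌋ + 1` (if `r > 0`) or `⌊a⌋` (if `r < 0`). -/
noncomputable def integerHittingTime (a r : ℝ) : ℝ :=
  (if 0 < r then 1 - Int.fract a else -Int.fract a) / r

theorem integerHittingTime_pos {a r : ℝ} (ha : Int.fract a ≠ 0) (hr : r ≠ 0) :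
    0 < integerHittingTime a r := by
  unfold integerHittingTime
  rcases hr.lt_or_gt with hr | hr
  · rw [if_neg hr.not_gt]
    exact div_pos_of_neg_of_neg (neg_neg_of_pos ((Int.fract_nonneg a).lt_of_ne' ha)) hr
  · rw [if_pos hr]
    exact div_pos (sub_pos.mpr (Int.fract_lt_one a)) hr

theorem exists_int_eq_add_integerHittingTime_mul {a r : ℝ} (hr : r ≠ 0) :
    ∃ z : ℤ, a + integerHittingTime a r * r = z := by
  unfold integerHittingTime
  rw [div_mul_cancel₀ _ hr]
  split_ifs
  · exact ⟨⌊a⌋ + 1, by push_cast; linarith [Int.floor_add_fract a]⟩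
  · exact ⟨⌊a⌋, by linarith [Int.floor_add_fract a]⟩

theorem add_mul_nonneg_of_le_integerHittingTime {a r t : ℝ} (ha : 0 ≤ a) (ht : 0 ≤ t)
    (hle : t ≤ integerHittingTime a r) : 0 ≤ a + t * r := by
  rcases le_or_gt 0 r with hr | hr
  · positivity
  · have hfloor : (0 : ℝ) ≤ ⌊a⌋ := by exact_mod_cast Int.floor_nonneg.mpr ha
    have hhit : integerHittingTime a r * r = -Int.fract a := by
      rw [integerHittingTime, if_neg hr.not_gt, div_mul_cancel₀ _ hr.ne]
    nlinarith [Int.floor_add_fract a, mul_le_mul_of_nonpos_right hle hr.le]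

theorem Convex.smul_sum_mem_of_zero_mem {E α : Type*} [AddCommGroup E] [Module ℝ E] {K : Set E}
    (hK : Convex ℝ K) (h0 : 0 ∈ K) {t : Finset α} {z : α → E} (hz : ∀ i ∈ t, z i ∈ K) {r : ℝ}
    (hr : 0 ≤ r) (hrt : r * #t ≤ 1) : r • ∑ i ∈ t, z i ∈ K := by
  rcases t.eq_empty_or_nonempty with rfl | ht
  · simpa using h0
  have hcard : (0 : ℝ) < #t := by exact_mod_cast ht.card_pos
  have hmean : (#t : ℝ)⁻¹ • ∑ i ∈ t, z i ∈ K := by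
    rw [smul_sum]
    exact hK.sum_mem (fun _ _ => by positivity) (by simp [hcard.ne']) hz
  have hscale : r • ∑ i ∈ t, z i = (r * #t) • ((#t : ℝ)⁻¹ • ∑ i ∈ t, z i) := by
    rw [smul_smul, mul_assoc, mul_inv_cancel₀ hcard.ne', mul_one]
  rw [hscale]
  exact hK.smul_mem_of_zero_mem h0 hmean ⟨by positivity, hrt⟩

section Fractional

variable {σ : Type*} [Fintype σ]

open Classical in
noncomputable def fracSupport (x : σ → ℝ) : Finset σ := {j | Int.fract (x j) ≠ 0}

theorem mem_fracSupport {x : σ → ℝ} {j : σ} : j ∈ fracSupport x ↔ Int.fract (x j) ≠ 0 := by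
  simp [fracSupport]

theorem exists_pos_fracSupport_add_smul_ssubset {y w : σ → ℝ} (hy : 0 ≤ y) (hw : w ≠ 0)
    (hsupp : ∀ j, w j ≠ 0 → j ∈ fracSupport y) :
    ∃ t : ℝ, 0 < t ∧ 0 ≤ y + t • w ∧ fracSupport (y + t • w) ⊂ fracSupport y := by
  classical
  have hne : ({j | w j ≠ 0} : Finset σ).Nonempty := by
    obtain ⟨j, hj⟩ := Function.ne_iff.mp hw
    exact ⟨j, by simpa using hj⟩
  obtain ⟨j₀, hj₀, hmin⟩ := exists_min_image _ (fun j => integerHittingTime (y j) (w j)) hne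
  simp only [mem_filter, mem_univ, true_and] at hj₀ hmin
  set t := integerHittingTime (y j₀) (w j₀)
  have ht : 0 < t := integerHittingTime_pos (mem_fracSupport.mp (hsupp j₀ hj₀)) hj₀
  refine ⟨t, ht, fun j => ?_, (ssubset_iff_of_subset fun j hj => ?_).mpr ⟨j₀, hsupp j₀ hj₀, ?_⟩⟩
  · by_cases hwj : w j = 0
    · simpa [hwj] using hy j
    · simpa [mul_comm] using add_mul_nonneg_of_le_integerHittingTime (hy j) ht.le (hmin j hwj)
  · by_cases hwj : w j = 0
    · simpa [mem_fracSupport, hwj] using hj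
    · exact hsupp j hwj
  · obtain ⟨z, hz⟩ := exists_int_eq_add_integerHittingTime_mul (a := y j₀) hj₀
    simp only [mem_fracSupport, Pi.add_apply, Pi.smul_apply, smul_eq_mul, not_not, t, hz,
      Int.fract_intCast]

end Fractional

def integerHull {σ : Type*} (Q : Set (σ → ℝ)) : Set (σ → ℝ) :=
  convexHull ℝ (Q ∩ {x | ∀ j, ∃ z : ℤ, x j = z})

theorem convex_integerHull {σ : Type*} (Q : Set (σ → ℝ)) : Convex ℝ (integerHull Q) :=
  convex_convexHull ℝ _

theorem integerHull_subset {σ : Type*} {Q : Set (σ → ℝ)} (hQ : Convex ℝ Q) :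
    integerHull Q ⊆ Q :=
  convexHull_min Set.inter_subset_left hQ

section Packing

variable {ι σ : Type*} [Fintype σ]

def packingPolyhedron (C : Matrix ι σ ℝ) (d : ι → ℝ) : Set (σ → ℝ) :=
  {x | 0 ≤ x ∧ C *ᵥ x ≤ d}

theorem convex_packingPolyhedron (C : Matrix ι σ ℝ) (d : ι → ℝ) :
    Convex ℝ (packingPolyhedron C d) :=
  (convex_Ici 0).inter ((convex_Iic d).linear_preimage C.mulVecLin)

theorem add_smul_mem_packingPolyhedron {C : Matrix ι σ ℝ} {d : ι → ℝ} {y w : σ → ℝ}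
    (hy : y ∈ packingPolyhedron C d) (hw : C *ᵥ w = 0) {t : ℝ} (h0 : 0 ≤ y + t • w) :
    y + t • w ∈ packingPolyhedron C d := by
  refine ⟨h0, ?_⟩
  rw [mulVec_add, mulVec_smul, hw, smul_zero, add_zero]
  exact hy.2

theorem mem_packingPolyhedron_of_le {C : Matrix ι σ ℝ} {d : ι → ℝ} (hC : ∀ i j, 0 ≤ C i j)
    {x y : σ → ℝ} (hx : x ∈ packingPolyhedron C d) (hy : 0 ≤ y) (hyx : y ≤ x) :
    y ∈ packingPolyhedron C d :=
  ⟨hy, fun i => (sum_le_sum fun j _ => mul_le_mul_of_nonneg_left (hyx j) (hC i j)).trans (hx.2 i)⟩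

/-- Instead of passing to vertices (the polyhedron may be unbounded), move from `y` both ways
along a kernel vector of the fractional columns of `C` until another coordinate becomes
integral; `y` lies between the two endpoints. -/
theorem packingPolyhedron_subset_convexHull_card_fracSupport_le [Fintype ι] (C : Matrix ι σ ℝ)
    (d : ι → ℝ) : packingPolyhedron C d ⊆
      convexHull ℝ {x ∈ packingPolyhedron C d | #(fracSupport x) ≤ Fintype.card ι} := by
  intro y hy
  induction hN : #(fracSupport y) using Nat.strong_induction_on generalizing y with
  | _ N ih =>
  by_cases hsmall : N ≤ Fintype.card ι
  · exact subset_convexHull ℝ _ ⟨hy, hN ▸ hsmall⟩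
  obtain ⟨w, hw0, hws, hCw⟩ :=
    C.exists_ne_zero_mulVec_eq_zero_of_card_lt (fracSupport y) (by omega)
  have hsupp : ∀ j, w j ≠ 0 → j ∈ fracSupport y := fun j => not_imp_comm.mp (hws j)
  obtain ⟨t₁, ht₁, hp, hpF⟩ := exists_pos_fracSupport_add_smul_ssubset hy.1 hw0 hsupp
  obtain ⟨t₂, ht₂, hq, hqF⟩ :=
    exists_pos_fracSupport_add_smul_ssubset hy.1 (neg_ne_zero.mpr hw0) (by simpa using hsupp)
  have hp' := ih _ (hN ▸ card_lt_card hpF) (add_smul_mem_packingPolyhedron hy hCw hp) rfl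
  have hq' := ih _ (hN ▸ card_lt_card hqF)
    (add_smul_mem_packingPolyhedron hy (by rw [mulVec_neg, hCw, neg_zero]) hq) rfl
  have hy_eq : y = (t₂ / (t₁ + t₂)) • (y + t₁ • w) + (t₁ / (t₁ + t₂)) • (y + t₂ • -w) := by
    match_scalars <;> field_simp <;> ring
  rw [hy_eq]
  exact convex_convexHull ℝ _ hp' hq' (by positivity) (by positivity) (by field_simp; ring)

/-- Write `v = ⌊v⌋ + ∑ⱼ fract (v j) • eⱼ` over the at most `k` fractional coordinates `j`;
`⌊v⌋`, `0` and every `eⱼ` are integer points of the packing polyhedron. -/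
theorem inv_add_one_smul_mem_integerHull {C : Matrix ι σ ℝ} {d : ι → ℝ}
    (hC : ∀ i j, 0 ≤ C i j) (hCd : ∀ i j, C i j ≤ d i) {v : σ → ℝ}
    (hv : v ∈ packingPolyhedron C d) {k : ℕ} (hk : #(fracSupport v) ≤ k) :
    ((k : ℝ) + 1)⁻¹ • v ∈ integerHull (packingPolyhedron C d) := by
  classical
  set Q := packingPolyhedron C d
  have hint : ∀ x ∈ Q, (∀ j, ∃ z : ℤ, x j = z) → x ∈ integerHull Q :=
    fun x hx hz => subset_convexHull ℝ _ ⟨hx, hz⟩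
  have hfloor : (fun j => (⌊v j⌋ : ℝ)) ∈ integerHull Q :=
    hint _ (mem_packingPolyhedron_of_le hC hv
      (fun j => Int.cast_nonneg_iff.mpr (Int.floor_nonneg.mpr (hv.1 j))) (fun j => Int.floor_le _))
      (fun j => ⟨_, rfl⟩)
  have hzero : (0 : σ → ℝ) ∈ integerHull Q :=
    hint _ (mem_packingPolyhedron_of_le hC hv le_rfl hv.1) (fun _ => ⟨0, by simp⟩)
  have hunit : ∀ j, Pi.single j (1 : ℝ) ∈ integerHull Q := by
    refine fun j => hint _ ⟨Pi.single_nonneg.mpr zero_le_one, ?_⟩ fun i => ?_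
    · rw [mulVec_single_one]
      exact fun i => hCd i j
    · by_cases hij : i = j
      · exact ⟨1, by simp [hij]⟩
      · exact ⟨0, by simp [hij]⟩
  have hdecomp :
      v = (fun j => (⌊v j⌋ : ℝ)) + ∑ j ∈ fracSupport v, Int.fract (v j) • Pi.single j 1 := by
    ext j
    by_cases hj : Int.fract (v j) = 0
    · simp [Finset.sum_apply, Pi.single_apply, mem_fracSupport, hj]
      linarith [Int.floor_add_fract (v j)]
    · simp [Finset.sum_apply, Pi.single_apply, mem_fracSupport, hj]
  rw [hdecomp, add_sum_eq_sum_insertNone]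
  refine (convex_integerHull Q).smul_sum_mem_of_zero_mem hzero ?_ (by positivity) ?_
  · rintro (_ | j) -
    · exact hfloor
    · exact (convex_integerHull Q).smul_mem_of_zero_mem hzero (hunit j)
        ⟨Int.fract_nonneg _, (Int.fract_lt_one _).le⟩
  · rw [card_insertNone, inv_mul_le_one₀ (by positivity)]
    exact_mod_cast Nat.add_le_add_right hk 1

theorem packingPolyhedron_subset_smul_integerHull [Fintype ι] {C : Matrix ι σ ℝ} {d : ι → ℝ}
    (hC : ∀ i j, 0 ≤ C i j) (hCd : ∀ i j, C i j ≤ d i) :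
    packingPolyhedron C d ⊆ ((Fintype.card ι : ℝ) + 1) • integerHull (packingPolyhedron C d) := by
  intro x hx
  rw [Set.mem_smul_set_iff_inv_smul_mem₀ (by positivity)]
  have hx' := Set.smul_mem_smul_set (a := ((Fintype.card ι : ℝ) + 1)⁻¹)
    (packingPolyhedron_subset_convexHull_card_fracSupport_le C d hx)
  rw [← convexHull_smul] at hx'
  refine convexHull_min ?_ (convex_integerHull _) hx'
  rintro _ ⟨v, ⟨hv, hvk⟩, rfl⟩
  exact inv_add_one_smul_mem_integerHull hC hCd hv hvk

end Packing

section Aggregation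

variable {κ ι σ : Type*} [Fintype ι]

theorem mem_packingPolyhedron_mul_iff [Fintype σ] (L : Matrix κ ι ℝ) (C : Matrix ι σ ℝ)
    (d : ι → ℝ) {x : σ → ℝ} :
    x ∈ packingPolyhedron (L * C) (L *ᵥ d) ↔ 0 ≤ x ∧ ∀ k, L k ⬝ᵥ (C *ᵥ x) ≤ L k ⬝ᵥ d := by
  simp only [packingPolyhedron, Set.mem_ofPred_eq, ← mulVec_mulVec, Pi.le_def]
  rfl

theorem Matrix.mul_apply_nonneg {L : Matrix κ ι ℝ} {C : Matrix ι σ ℝ} (hL : ∀ k i, 0 ≤ L k i)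
    (hC : ∀ i j, 0 ≤ C i j) (k : κ) (j : σ) : 0 ≤ (L * C) k j :=
  sum_nonneg fun i _ => mul_nonneg (hL k i) (hC i j)

theorem Matrix.mul_apply_le_mulVec_apply {L : Matrix κ ι ℝ} {C : Matrix ι σ ℝ} {d : ι → ℝ}
    (hL : ∀ k i, 0 ≤ L k i) (hCd : ∀ i j, C i j ≤ d i) (k : κ) (j : σ) :
    (L * C) k j ≤ (L *ᵥ d) k :=
  sum_le_sum fun i _ => mul_le_mul_of_nonneg_left (hCd i j) (hL k i)

end Aggregation

section Closures

variable {m n : ℕ} (A : Matrix (Fin m) (Fin n) ℚ) (b : Fin m → ℚ)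

theorem packAggIntHull_eq (l : Fin m → ℝ) :
    packAggIntHull A b l = integerHull (packingPolyhedron
      (of ![l] * A.map ((↑) : ℚ → ℝ)) (of ![l] *ᵥ fun i => (b i : ℝ))) := by
  unfold packAggIntHull integerHull
  congr 1
  ext x
  rw [Set.mem_inter_iff, mem_packingPolyhedron_mul_iff]
  simp [Pi.le_def]
  tauto

theorem packAggIntHull2_eq (l₁ l₂ : Fin m → ℝ) :
    packAggIntHull2 A b l₁ l₂ = integerHull (packingPolyhedron
      (of ![l₁, l₂] * A.map ((↑) : ℚ → ℝ)) (of ![l₁, l₂] *ᵥ fun i => (b i : ℝ))) := by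
  unfold packAggIntHull2 integerHull
  congr 1
  ext x
  rw [Set.mem_inter_iff, mem_packingPolyhedron_mul_iff]
  simp [Pi.le_def, Fin.forall_fin_two]
  tauto

theorem packAggClosure_subset_packingPolyhedron_mul {κ : Type*} {L : Matrix κ (Fin m) ℝ}
    (hL : ∀ k i, 0 ≤ L k i) : packAggClosure A b ⊆
      packingPolyhedron (L * A.map ((↑) : ℚ → ℝ)) (L *ᵥ fun i => (b i : ℝ)) := by
  intro x hx
  have hrow (l : Fin m → ℝ) (hl : ∀ i, 0 ≤ l i) :
      0 ≤ x ∧ l ⬝ᵥ (A.map ((↑) : ℚ → ℝ) *ᵥ x) ≤ l ⬝ᵥ fun i => (b i : ℝ) := by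
    have := integerHull_subset (convex_packingPolyhedron _ _)
      (packAggIntHull_eq A b l ▸ Set.mem_iInter₂.mp hx l hl)
    rw [mem_packingPolyhedron_mul_iff] at this
    exact ⟨this.1, this.2 0⟩
  rw [mem_packingPolyhedron_mul_iff]
  -- the zero multiplier supplies `0 ≤ x` also when `κ` is empty
  exact ⟨(hrow 0 fun _ => le_rfl).1, fun k => (hrow (L k) (hL k)).2⟩

end Closures

theorem packing_aggClosure_subset_three_smul_agg2Closure_general
    {m n : ℕ}
    (A : Matrix (Fin m) (Fin n) ℚ) (b : Fin m → ℚ)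
    (hA : ∀ i j, 0 ≤ A i j) (hAb : ∀ i j, A i j ≤ b i) :
    packAggClosure A b ⊆ (3 : ℝ) • packAgg2Closure A b := by
  intro x hx
  rw [Set.mem_smul_set_iff_inv_smul_mem₀ three_ne_zero]
  simp only [packAgg2Closure, Set.mem_iInter]
  intro l₁ hl₁ l₂ hl₂
  have hL : ∀ k i, 0 ≤ of ![l₁, l₂] k i := Fin.forall_fin_two.mpr ⟨hl₁, hl₂⟩
  have hA' : ∀ i j, 0 ≤ A.map ((↑) : ℚ → ℝ) i j := fun i j => Rat.cast_nonneg.mpr (hA i j)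
  have hAb' : ∀ i j, A.map ((↑) : ℚ → ℝ) i j ≤ b i := fun i j => Rat.cast_le.mpr (hAb i j)
  have h := packingPolyhedron_subset_smul_integerHull
    (mul_apply_nonneg hL hA') (mul_apply_le_mulVec_apply hL hAb')
    (packAggClosure_subset_packingPolyhedron_mul A b hL hx)
  rw [packAggIntHull2_eq, ← Set.mem_smul_set_iff_inv_smul_mem₀ three_ne_zero]
  convert h
  norm_num

/-- For a packing polyhedron `P = {x ≥ 0 : Ax ≤ b}` with rational data
(`0 ≤ A_{ij}`, `0 ≤ b_i`, `A_{ij} ≤ b_i`), `𝒜(P) ⊆ 3 · 𝒜₂(P)`. -/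
theorem packing_aggClosure_subset_three_smul_agg2Closure
    {m n : ℕ} (hm : 0 < m) (hn : 0 < n)
    (A : Matrix (Fin m) (Fin n) ℚ) (b : Fin m → ℚ)
    (hA : ∀ i j, 0 ≤ A i j) (hb : ∀ i, 0 ≤ b i) (hAb : ∀ i j, A i j ≤ b i) :
    packAggClosure A b ⊆ (3 : ℝ) • packAgg2Closure A b :=
  packing_aggClosure_subset_three_smul_agg2Closure_general A b hA hAb
end

section
/- Let P = {x ∈ ℝⁿ_+ : Ax ≥ b} be a covering polyhedron with rational data and m ≥ 2 constraints, i.e., A_{ij} ≥ 0, b_i ≥ 0 and A_{ij} ≤ b_i for all i ∈ [m], j ∈ [n]. Then 2-𝒜(P) ⊆ (1/2.5)·𝒜₂(P): the original 2-row closure of a covering polyhedron is contained in (2/5) times its 2-aggregation closure. -/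
open scoped Pointwise

/-- `P^I(λ)` for a covering system `Ax ≥ b, x ≥ 0`: the convex hull of the nonnegative
integer points satisfying the aggregated constraint `λᵀAx ≥ λᵀb`. -/
noncomputable def coverAggIntHull {m n : ℕ} (A : Matrix (Fin m) (Fin n) ℚ) (b : Fin m → ℚ)
    (lam : Fin m → ℝ) : Set (Fin n → ℝ) :=
  convexHull ℝ {x | (∀ j, 0 ≤ x j) ∧ (∀ j, ∃ z : ℤ, x j = (z : ℝ)) ∧
    ∑ i, lam i * ∑ j, (A i j : ℝ) * x j ≥ ∑ i, lam i * (b i : ℝ)}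

/-- `P^I(λ₁,λ₂)` for a covering system. -/
noncomputable def coverAggIntHull2 {m n : ℕ} (A : Matrix (Fin m) (Fin n) ℚ) (b : Fin m → ℚ)
    (l1 l2 : Fin m → ℝ) : Set (Fin n → ℝ) :=
  convexHull ℝ {x | (∀ j, 0 ≤ x j) ∧ (∀ j, ∃ z : ℤ, x j = (z : ℝ)) ∧
    (∑ i, l1 i * ∑ j, (A i j : ℝ) * x j ≥ ∑ i, l1 i * (b i : ℝ)) ∧
    (∑ i, l2 i * ∑ j, (A i j : ℝ) * x j ≥ ∑ i, l2 i * (b i : ℝ))}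

/-- The aggregation closure `𝒜(P) = ∩_{λ ≥ 0} P^I(λ)` of a covering polyhedron. -/
noncomputable def coverAggClosure {m n : ℕ} (A : Matrix (Fin m) (Fin n) ℚ) (b : Fin m → ℚ) :
    Set (Fin n → ℝ) :=
  ⋂ lam ∈ {l : Fin m → ℝ | ∀ i, 0 ≤ l i}, coverAggIntHull A b lam

/-- The 2-aggregation closure `𝒜₂(P) = ∩_{λ₁,λ₂ ≥ 0} P^I(λ₁,λ₂)` of a covering polyhedron. -/
noncomputable def coverAgg2Closure {m n : ℕ} (A : Matrix (Fin m) (Fin n) ℚ) (b : Fin m → ℚ) :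
    Set (Fin n → ℝ) :=
  ⋂ l1 ∈ {l : Fin m → ℝ | ∀ i, 0 ≤ l i}, ⋂ l2 ∈ {l : Fin m → ℝ | ∀ i, 0 ≤ l i},
    coverAggIntHull2 A b l1 l2

/-- The original 2-row closure `2-𝒜(P) = ∩_{{i₁,i₂}⊆[m], i₁≠i₂} P^I(e_{i₁},e_{i₂})`
of a covering polyhedron. -/
noncomputable def coverRow2Closure {m n : ℕ} (A : Matrix (Fin m) (Fin n) ℚ) (b : Fin m → ℚ) :
    Set (Fin n → ℝ) :=
  ⋂ i1 : Fin m, ⋂ i2 : Fin m, ⋂ _ : i1 ≠ i2,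
    coverAggIntHull2 A b (Pi.single i1 1) (Pi.single i2 1)

/-!
Points of `2-𝒜(P)` satisfy `x ≥ 0, Ax ≥ b`, so for `λ₁, λ₂ ≥ 0` they satisfy the two
aggregated covering rows `cₖ = λₖᵀA ≥ 0`, `dₖ = λₖᵀb ≥ cₖⱼ`. The integer hull of such a system
contains the closed convex set `conv F + ℝⁿ₊` (with `F` its integer points in a large box), which
in turn contains all the integer points; by separation, `(5/2)x` lies in it once every
nonnegative cost `α` is undercut at some integer point. A basic solution of the two-row LP costs
at most `α·x` and has at most two nonzero coordinates `S, T`. Rounding `(5/2)(S, T)` down works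
unless it fails for some row, which forces `(5/2)(S, T)` into `(3/2, 2) × (1/2, 1)` (up to
symmetry); then every row is covered by both `(2, 0)` and `(1, 1)`, and the cheaper of the two
costs at most `α·(5/2)(S, T)`.
-/

open Set Matrix Function

variable {ι κ σ : Type*}

def natPoints (σ : Type*) : Set (σ → ℝ) := univ.pi fun _ => range ((↑) : ℕ → ℝ)

def coverIntPoints [Fintype σ] (c : ι → σ → ℝ) (d : ι → ℝ) : Set (σ → ℝ) :=
  natPoints σ ∩ {x | ∀ i, d i ≤ c i ⬝ᵥ x}

theorem Real.nonneg_and_exists_intCast_iff {r : ℝ} :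
    (0 ≤ r ∧ ∃ z : ℤ, r = z) ↔ ∃ k : ℕ, (k : ℝ) = r := by
  constructor
  · rintro ⟨hr, z, rfl⟩
    exact ⟨z.toNat, by exact_mod_cast Int.toNat_of_nonneg (Int.cast_nonneg_iff.1 hr)⟩
  · rintro ⟨k, rfl⟩
    exact ⟨k.cast_nonneg, k, by simp⟩

theorem Set.Ici_zero_subset_convexHull_range_natCast :
    Ici (0 : ℝ) ⊆ convexHull ℝ (range ((↑) : ℕ → ℝ)) := by
  intro t (ht : 0 ≤ t)
  refine segment_subset_convexHull (mem_range_self ⌊t⌋₊) (mem_range_self (⌊t⌋₊ + 1)) ?_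
  rw [segment_eq_Icc (by simp)]
  exact ⟨Nat.floor_le ht, by push_cast; exact (Nat.lt_floor_add_one t).le⟩

theorem nonneg_of_mem_natPoints {v : σ → ℝ} (hv : v ∈ natPoints σ) : 0 ≤ v := fun j => by
  obtain ⟨k, hk⟩ := hv j trivial
  simp [← hk]

theorem single_add_single_mem_natPoints [DecidableEq σ] (j k : σ) (p q : ℕ) :
    Pi.single j (p : ℝ) + Pi.single k (q : ℝ) ∈ natPoints σ := fun l _ =>
  ⟨(Pi.single j p + Pi.single k q : σ → ℕ) l, by
    simp only [Pi.add_apply, Pi.single_apply]; split_ifs <;> simp⟩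

theorem mem_Ioo_of_mul_floor_add_mul_floor_lt {a b d S T : ℝ} (ha : 0 ≤ a) (hb : 0 ≤ b)
    (had : a ≤ d) (hbd : b ≤ d) (hS : 0 ≤ S) (hT : 0 ≤ T) (h : 5 / 2 * d ≤ a * S + b * T)
    (hfloor : a * ⌊S⌋₊ + b * ⌊T⌋₊ < d) :
    (S ∈ Ioo (3 / 2) 2 ∧ T ∈ Ioo (1 / 2) 1) ∨ (S ∈ Ioo (1 / 2) 1 ∧ T ∈ Ioo (3 / 2) 2) := by
  have hS₁ := Nat.floor_le hS
  have hS₂ := Nat.lt_floor_add_one S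
  have hT₁ := Nat.floor_le hT
  have hT₂ := Nat.lt_floor_add_one T
  have hP : (0 : ℝ) ≤ ⌊S⌋₊ := Nat.cast_nonneg _
  have hQ : (0 : ℝ) ≤ ⌊T⌋₊ := Nat.cast_nonneg _
  -- the fractional parts carry more than `3/2 * d`, and neither can carry more than `d`
  have hfracS : d / 2 < a * (S - ⌊S⌋₊) := by nlinarith
  have hfracT : d / 2 < b * (T - ⌊T⌋₊) := by nlinarith
  have had2 : d / 2 < a := by nlinarith
  have hbd2 : d / 2 < b := by nlinarith
  have hSf : 1 / 2 < S - ⌊S⌋₊ := by nlinarith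
  have hTf : 1 / 2 < T - ⌊T⌋₊ := by nlinarith
  have hlt : (⌊S⌋₊ : ℝ) + ⌊T⌋₊ < 2 := by
    nlinarith [mul_le_mul_of_nonneg_right had2.le hP, mul_le_mul_of_nonneg_right hbd2.le hQ]
  have hpos : (0 : ℝ) < ⌊S⌋₊ + ⌊T⌋₊ := by
    nlinarith [mul_le_mul_of_nonneg_right had hS, mul_le_mul_of_nonneg_right hbd hT]
  have hlt' : ⌊S⌋₊ + ⌊T⌋₊ < 2 := by exact_mod_cast hlt
  have hpos' : 0 < ⌊S⌋₊ + ⌊T⌋₊ := by exact_mod_cast hpos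
  obtain ⟨hS₀, hT₀⟩ | ⟨hS₀, hT₀⟩ : ⌊S⌋₊ = 1 ∧ ⌊T⌋₊ = 0 ∨ ⌊S⌋₊ = 0 ∧ ⌊T⌋₊ = 1 := by omega
  all_goals
    simp only [hS₀, hT₀, Nat.cast_one, Nat.cast_zero] at hS₂ hT₂ hSf hTf
    simp only [mem_Ioo]
  · left; constructor <;> constructor <;> linarith
  · right; constructor <;> constructor <;> linarith

theorem exists_nat_cover_of_mem_Ioo {a b d : ι → ℝ} {α β S T : ℝ} (ha : ∀ i, 0 ≤ a i)
    (hb : ∀ i, 0 ≤ b i) (hbd : ∀ i, b i ≤ d i)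
    (hS : S ∈ Ioo (3 / 2) 2) (hT : T ∈ Ioo (1 / 2) 1)
    (h : ∀ i, 5 / 2 * d i ≤ a i * S + b i * T) (hα : 0 ≤ α) (hβ : 0 ≤ β) :
    ∃ p q : ℕ, (∀ i, d i ≤ a i * p + b i * q) ∧ α * p + β * q ≤ α * S + β * T := by
  obtain ⟨hS₁, hS₂⟩ := hS
  obtain ⟨hT₁, hT₂⟩ := hT
  have hrow : ∀ i, d i ≤ a i * 2 ∧ d i ≤ a i + b i := fun i => by
    constructor <;> nlinarith [h i, ha i, hb i, hbd i]
  rcases le_total α β with hαβ | hβα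
  · refine ⟨2, 0, fun i => by simpa using (hrow i).1, ?_⟩
    push_cast
    nlinarith
  · refine ⟨1, 1, fun i => by simpa using (hrow i).2, ?_⟩
    push_cast
    nlinarith

theorem exists_nat_cover_of_five_halves_le {a b d : ι → ℝ} {α β S T : ℝ} (ha : ∀ i, 0 ≤ a i)
    (hb : ∀ i, 0 ≤ b i) (had : ∀ i, a i ≤ d i) (hbd : ∀ i, b i ≤ d i) (hS : 0 ≤ S) (hT : 0 ≤ T)
    (h : ∀ i, 5 / 2 * d i ≤ a i * S + b i * T) (hα : 0 ≤ α) (hβ : 0 ≤ β) :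
    ∃ p q : ℕ, (∀ i, d i ≤ a i * p + b i * q) ∧ α * p + β * q ≤ α * S + β * T := by
  by_cases hfloor : ∀ i, d i ≤ a i * ⌊S⌋₊ + b i * ⌊T⌋₊
  · refine ⟨⌊S⌋₊, ⌊T⌋₊, hfloor, ?_⟩
    nlinarith [Nat.floor_le hS, Nat.floor_le hT]
  push Not at hfloor
  obtain ⟨i, hi⟩ := hfloor
  rcases mem_Ioo_of_mul_floor_add_mul_floor_lt (ha i) (hb i) (had i) (hbd i) hS hT (h i) hi with
    ⟨hS', hT'⟩ | ⟨hS', hT'⟩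
  · exact exists_nat_cover_of_mem_Ioo ha hb hbd hS' hT' h hα hβ
  · obtain ⟨q, p, hcover, hcost⟩ := exists_nat_cover_of_mem_Ioo hb ha had hT' hS'
      (fun i => by linarith [h i]) hβ hα
    exact ⟨p, q, fun i => by linarith [hcover i], by linarith⟩

section Fintype

variable [Fintype σ]

theorem Ici_zero_subset_convexHull_natPoints : Ici (0 : σ → ℝ) ⊆ convexHull ℝ (natPoints σ) := by
  rw [natPoints, convexHull_pi]
  exact fun v hv j _ => Set.Ici_zero_subset_convexHull_range_natCast (hv j)

theorem mem_of_forall_nonneg_exists_dotProduct_le {C : Set (σ → ℝ)} (hconv : Convex ℝ C)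
    (hclosed : IsClosed C) (hup : ∀ z ∈ C, ∀ v, 0 ≤ v → z + v ∈ C) {y : σ → ℝ}
    (hy : ∀ α, 0 ≤ α → ∃ z ∈ C, α ⬝ᵥ z ≤ α ⬝ᵥ y) : y ∈ C := by
  classical
  by_contra hyC
  obtain ⟨f, u, hfy, hfC⟩ := geometric_hahn_banach_point_closed hconv hclosed hyC
  set α : σ → ℝ := fun j => f (Pi.single j 1)
  have hf : ∀ w, f w = α ⬝ᵥ w := fun w => by
    conv_lhs => rw [pi_eq_sum_univ' w]
    simp [dotProduct, α, mul_comm]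
  obtain ⟨z₀, hz₀, -⟩ := hy 0 le_rfl
  -- `C` is closed under adding `t • eⱼ`, so `f` cannot decrease along `eⱼ`
  have hα : 0 ≤ α := by
    intro j
    by_contra! hj
    rw [Pi.zero_apply] at hj
    have hαj : α j ≠ 0 := hj.ne
    set t := (f z₀ - u) / -α j
    have ht : 0 ≤ t := div_nonneg (by linarith [hfC z₀ hz₀]) (by linarith)
    have hmem := hfC _ (hup z₀ hz₀ (t • Pi.single j 1) (smul_nonneg ht (by simp)))
    have : f (z₀ + t • Pi.single j 1) = u := by
      rw [map_add, map_smul, smul_eq_mul, show f (Pi.single j 1) = α j from rfl]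
      simp only [t]
      field_simp
      ring
    linarith
  obtain ⟨z, hz, hzy⟩ := hy α hα
  linarith [hfC z hz, hf z, hf y]

theorem exists_nonneg_add_smul_support_ssubset {x w : σ → ℝ} (hx : 0 ≤ x) (hw : ∃ j, w j < 0)
    (hwx : support w ⊆ support x) :
    ∃ t : ℝ, 0 ≤ t ∧ 0 ≤ x + t • w ∧ support (x + t • w) ⊂ support x := by
  classical
  obtain ⟨j, hj⟩ := hw
  obtain ⟨l, hl, hmin⟩ := (Finset.univ.filter fun j => w j < 0).exists_min_image
    (fun j => x j / -w j) ⟨j, by simpa using hj⟩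
  simp only [Finset.mem_filter, Finset.mem_univ, true_and] at hl hmin
  have hx' : ∀ k, 0 ≤ x k := hx
  have hxl : x l ≠ 0 := hwx hl.ne
  -- the ratio test: the longest step along `w` that keeps `x` nonnegative
  set t := x l / -w l
  have ht : 0 ≤ t := div_nonneg (hx' l) (by linarith)
  refine ⟨t, ht, fun k => ?_, ssubset_of_subset_of_ne (fun k hk => ?_) fun h => ?_⟩
  · change 0 ≤ x k + t * w k
    rcases lt_or_ge (w k) 0 with hk | hk
    · linarith [(le_div_iff₀ (neg_pos.2 hk)).1 (hmin k hk)]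
    · nlinarith [hx' k]
  · by_contra hxk
    have hwk : w k = 0 := by by_contra h; exact hxk (hwx h)
    simp only [mem_support, not_not] at hxk
    simp [hxk, hwk] at hk
  · have : l ∈ support (x + t • w) := h ▸ hxl
    apply this
    change x l + t * w l = 0
    have hwl : w l ≠ 0 := hl.ne
    simp only [t]
    field_simp
    ring

theorem exists_neg_apply_dotProduct_nonpos {α v : σ → ℝ} (hα : 0 ≤ α) (hv : v ≠ 0) :
    ∃ w ∈ ({v, -v} : Set (σ → ℝ)), α ⬝ᵥ w ≤ 0 ∧ ∃ j, w j < 0 := by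
  wlog h : α ⬝ᵥ v ≤ 0 generalizing v
  · obtain ⟨w, hw, hαw⟩ := this (neg_ne_zero.2 hv) (by rw [dotProduct_neg]; linarith)
    exact ⟨w, by rw [neg_neg, pair_comm] at hw; exact hw, hαw⟩
  by_cases hneg : ∃ j, v j < 0
  · exact ⟨v, mem_insert _ _, h, hneg⟩
  push Not at hneg
  obtain ⟨j, hj⟩ := Function.ne_iff.1 hv
  have hαv : α ⬝ᵥ v = 0 := le_antisymm h (dotProduct_nonneg_of_nonneg hα hneg)
  exact ⟨-v, mem_insert_of_mem _ rfl, by rw [dotProduct_neg, hαv, neg_zero],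
    j, neg_neg_iff_pos.2 ((hneg j).lt_of_ne' hj)⟩

theorem exists_eq_single_add_single [DecidableEq σ] [Nonempty σ] {y : σ → ℝ} (hy : 0 ≤ y)
    (hsupp : (support y).ncard ≤ 2) :
    ∃ j k S T, 0 ≤ S ∧ 0 ≤ T ∧ y = Pi.single j S + Pi.single k T := by
  obtain h | h | h : (support y).ncard = 0 ∨ (support y).ncard = 1 ∨ (support y).ncard = 2 := by
    omega
  · rw [ncard_eq_zero, support_eq_empty_iff] at h
    exact ⟨Classical.arbitrary σ, Classical.arbitrary σ, 0, 0, le_rfl, le_rfl, by simp [h]⟩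
  · obtain ⟨j, hj⟩ := ncard_eq_one.1 h
    refine ⟨j, j, y j, 0, hy j, le_rfl, funext fun l => ?_⟩
    by_cases hl : l = j
    · subst hl; simp
    · have : l ∉ support y := hj ▸ hl
      simpa [Pi.single_apply, hl] using this
  · obtain ⟨j, k, hjk, hjk'⟩ := ncard_eq_two.1 h
    refine ⟨j, k, y j, y k, hy j, hy k, funext fun l => ?_⟩
    by_cases hl : l = j
    · subst hl; simp [hjk]
    by_cases hl' : l = k
    · subst hl'; simp [hl]
    · have : l ∉ support y := by rw [hjk']; simp [hl, hl']
      simpa [Pi.single_apply, hl, hl'] using this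

theorem coverIntPoints_add_natPoints_subset {c : ι → σ → ℝ} {d : ι → ℝ} (hc : ∀ i, 0 ≤ c i) :
    coverIntPoints c d + natPoints σ ⊆ coverIntPoints c d := by
  rintro _ ⟨x, ⟨hxℕ, hxd⟩, v, hvℕ, rfl⟩
  refine ⟨fun j _ => ?_, fun i => ?_⟩
  · obtain ⟨k, hk⟩ := hxℕ j trivial
    obtain ⟨l, hl⟩ := hvℕ j trivial
    exact ⟨k + l, by simp [hk, hl]⟩
  · rw [dotProduct_add]
    linarith [hxd i, dotProduct_nonneg_of_nonneg (hc i) (nonneg_of_mem_natPoints hvℕ)]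

theorem convexHull_coverIntPoints_add_Ici_zero_subset {c : ι → σ → ℝ} {d : ι → ℝ}
    (hc : ∀ i, 0 ≤ c i) :
    convexHull ℝ (coverIntPoints c d) + Ici 0 ⊆ convexHull ℝ (coverIntPoints c d) :=
  calc convexHull ℝ (coverIntPoints c d) + Ici 0
      ⊆ convexHull ℝ (coverIntPoints c d) + convexHull ℝ (natPoints σ) :=
        add_subset_add_left Ici_zero_subset_convexHull_natPoints
    _ = convexHull ℝ (coverIntPoints c d + natPoints σ) := (convexHull_add _ _).symm
    _ ⊆ convexHull ℝ (coverIntPoints c d) :=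
        convexHull_mono (coverIntPoints_add_natPoints_subset hc)

variable [Fintype ι]

theorem exists_ne_zero_dotProduct_eq_zero_support_subset (c : ι → σ → ℝ) {s : Set σ}
    (hs : Fintype.card ι < s.ncard) :
    ∃ v ≠ 0, (∀ i, c i ⬝ᵥ v = 0) ∧ support v ⊆ s := by
  classical
  let f : (σ → ℝ) →ₗ[ℝ] (ι → ℝ) × (↥sᶜ → ℝ) :=
    (Matrix.of c).mulVecLin.prod (LinearMap.funLeft ℝ ℝ Subtype.val)
  have hrank : Module.finrank ℝ ((ι → ℝ) × (↥sᶜ → ℝ)) < Module.finrank ℝ (σ → ℝ) := by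
    simp only [Module.finrank_prod, Module.finrank_fintype_fun_eq_card]
    have := s.ncard_add_ncard_compl
    rw [← Nat.card_eq_fintype_card (α := ↥sᶜ), Nat.card_coe_set_eq, Nat.card_eq_fintype_card] at *
    omega
  obtain ⟨v, hv, hv0⟩ :=
    Submodule.ne_bot_iff _ |>.mp (LinearMap.ker_ne_bot_of_finrank_lt (f := f) hrank)
  have hv' : (Matrix.of c *ᵥ v, fun l : ↥sᶜ => v l) = 0 := hv
  rw [Prod.mk_eq_zero] at hv'
  refine ⟨v, hv0, fun i => congrFun hv'.1 i, fun j hj => ?_⟩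
  by_contra hjs
  exact hj (congrFun hv'.2 ⟨j, hjs⟩)

theorem exists_support_ssubset_of_card_lt_ncard (c : ι → σ → ℝ) {α x : σ → ℝ} (hα : 0 ≤ α)
    (hx : 0 ≤ x) (hcard : Fintype.card ι < (support x).ncard) :
    ∃ y, 0 ≤ y ∧ (∀ i, c i ⬝ᵥ y = c i ⬝ᵥ x) ∧ α ⬝ᵥ y ≤ α ⬝ᵥ x ∧ support y ⊂ support x := by
  obtain ⟨v, hv0, hcv, hvx⟩ := exists_ne_zero_dotProduct_eq_zero_support_subset c hcard
  obtain ⟨w, hw, hαw, hwneg⟩ := exists_neg_apply_dotProduct_nonpos hα hv0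
  have hcw : ∀ i, c i ⬝ᵥ w = 0 := by
    rcases hw with rfl | rfl
    · exact hcv
    · simpa [dotProduct_neg] using hcv
  have hwx : support w ⊆ support x := by
    rcases hw with rfl | rfl
    · exact hvx
    · rwa [support_neg]
  obtain ⟨t, ht, hy0, hyx⟩ := exists_nonneg_add_smul_support_ssubset hx hwneg hwx
  refine ⟨x + t • w, hy0, fun i => ?_, ?_, hyx⟩
  · rw [dotProduct_add, dotProduct_smul, hcw, smul_zero, add_zero]
  · rw [dotProduct_add, dotProduct_smul, smul_eq_mul]
    nlinarith

theorem exists_nonneg_dotProduct_eq_support_ncard_le (c : ι → σ → ℝ) {α x : σ → ℝ}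
    (hα : 0 ≤ α) (hx : 0 ≤ x) :
    ∃ y, 0 ≤ y ∧ (∀ i, c i ⬝ᵥ y = c i ⬝ᵥ x) ∧ α ⬝ᵥ y ≤ α ⬝ᵥ x ∧
      (support y).ncard ≤ Fintype.card ι := by
  induction hN : (support x).ncard using Nat.strong_induction_on generalizing x with
  | _ N ih =>
    by_cases hcard : N ≤ Fintype.card ι
    · exact ⟨x, hx, fun _ => rfl, le_rfl, hN ▸ hcard⟩
    obtain ⟨y, hy, hcy, hαy, hyx⟩ :=
      exists_support_ssubset_of_card_lt_ncard c hα hx (hN ▸ not_le.1 hcard)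
    obtain ⟨z, hz, hcz, hαz, hzcard⟩ := ih _ (hN ▸ ncard_lt_ncard hyx) hy rfl
    exact ⟨z, hz, fun i => (hcz i).trans (hcy i), hαz.trans hαy, hzcard⟩

variable {c : ι → σ → ℝ} {d : ι → ℝ}

theorem exists_min_const_mem_coverIntPoints (hc : ∀ i, 0 ≤ c i) :
    ∃ B : ℕ, ∀ x ∈ coverIntPoints c d, (fun j => min (x j) B) ∈ coverIntPoints c d := by
  obtain ⟨M, hM⟩ := (Set.finite_range fun p : ι × σ => d p.1 / c p.1 p.2).bddAbove
  obtain ⟨B, hB⟩ := exists_nat_ge M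
  have hdB : ∀ i j, 0 < c i j → d i ≤ c i j * B := fun i j hij => by
    have := (hM ⟨(i, j), rfl⟩).trans hB
    rwa [div_le_iff₀' hij] at this
  refine ⟨B, fun x ⟨hxℕ, hxd⟩ => ⟨fun j _ => ?_, fun i => ?_⟩⟩
  · obtain ⟨k, hk⟩ := hxℕ j trivial
    exact ⟨min k B, by simp [← hk]⟩
  · by_cases h : ∃ j, (B : ℝ) < x j ∧ 0 < c i j
    · obtain ⟨j, hxj, hcj⟩ := h
      have hmin : 0 ≤ fun j => min (x j) (B : ℝ) := fun j =>
        le_min (nonneg_of_mem_natPoints hxℕ j) B.cast_nonneg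
      calc d i ≤ c i j * min (x j) B := by rw [min_eq_right hxj.le]; exact hdB i j hcj
        _ ≤ c i ⬝ᵥ fun j => min (x j) B :=
          Finset.single_le_sum (fun l _ => mul_nonneg (hc i l) (hmin l)) (Finset.mem_univ j)
    · push Not at h
      convert hxd i using 1
      refine Finset.sum_congr rfl fun j _ => ?_
      rcases le_or_gt (x j) B with hj | hj
      · simp only [min_eq_left hj]
      · rw [le_antisymm (h j hj) (hc i j)]; simp

theorem exists_mem_coverIntPoints_dotProduct_le [DecidableEq σ] [Nonempty σ]
    (hι : Fintype.card ι ≤ 2) (hc : ∀ i, 0 ≤ c i) (hcd : ∀ i j, c i j ≤ d i) {α x : σ → ℝ}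
    (hα : 0 ≤ α) (hx : 0 ≤ x) (hxd : ∀ i, d i ≤ c i ⬝ᵥ x) :
    ∃ g ∈ coverIntPoints c d, α ⬝ᵥ g ≤ α ⬝ᵥ ((5 / 2 : ℝ) • x) := by
  obtain ⟨y, hy, hcy, hαy, hsupp⟩ := exists_nonneg_dotProduct_eq_support_ncard_le c hα hx
  obtain ⟨j, k, S, T, hS, hT, rfl⟩ := exists_eq_single_add_single hy (hsupp.trans hι)
  have hdot : ∀ (v : σ → ℝ) (S T : ℝ), v ⬝ᵥ (Pi.single j S + Pi.single k T) = v j * S + v k * T :=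
    fun v S T => by rw [dotProduct_add, dotProduct_single, dotProduct_single]
  obtain ⟨p, q, hcover, hcost⟩ := exists_nat_cover_of_five_halves_le
    (a := fun i => c i j) (b := fun i => c i k) (S := 5 / 2 * S) (T := 5 / 2 * T)
    (fun i => hc i j) (fun i => hc i k) (fun i => hcd i j) (fun i => hcd i k)
    (by positivity) (by positivity)
    (fun i => by have := hxd i; rw [← hcy, hdot] at this; linarith) (hα j) (hα k)
  refine ⟨_, ⟨single_add_single_mem_natPoints j k p q, fun i => ?_⟩, ?_⟩
  · rw [hdot]; exact hcover i
  · rw [hdot] at hαy ⊢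
    rw [dotProduct_smul, smul_eq_mul]
    linarith

theorem five_halves_smul_mem_convexHull_coverIntPoints [DecidableEq σ] [Nonempty σ]
    (hι : Fintype.card ι ≤ 2) (hc : ∀ i, 0 ≤ c i) (hcd : ∀ i j, c i j ≤ d i) {x : σ → ℝ}
    (hx : 0 ≤ x) (hxd : ∀ i, d i ≤ c i ⬝ᵥ x) :
    (5 / 2 : ℝ) • x ∈ convexHull ℝ (coverIntPoints c d) := by
  obtain ⟨B, hB⟩ := exists_min_const_mem_coverIntPoints (d := d) hc
  -- a closed convex set squeezed between the integer points and their convex hull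
  set F := coverIntPoints c d ∩ univ.pi fun _ => ((↑) : ℕ → ℝ) '' Iic B
  have hF : F.Finite := (Finite.pi fun _ => (finite_Iic B).image _).subset inter_subset_right
  have hFS : convexHull ℝ F + Ici 0 ⊆ convexHull ℝ (coverIntPoints c d) :=
    (add_subset_add_right (convexHull_mono inter_subset_left)).trans
      (convexHull_coverIntPoints_add_Ici_zero_subset hc)
  refine hFS (mem_of_forall_nonneg_exists_dotProduct_le ((convex_convexHull ℝ F).add
    (convex_Ici 0)) (isClosed_Ici.add_left_of_isCompact (hF.isCompact_convexHull (𝕜 := ℝ))) ?_ ?_)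
  · rintro _ ⟨u, hu, v, hv, rfl⟩ w hw
    exact ⟨u, hu, v + w, add_nonneg hv hw, (add_assoc _ _ _).symm⟩
  · intro α hα
    obtain ⟨g, hg, hαg⟩ := exists_mem_coverIntPoints_dotProduct_le hι hc hcd hα hx hxd
    refine ⟨g, ⟨fun j => min (g j) B, subset_convexHull ℝ F ⟨hB g hg, fun j _ => ?_⟩,
      g - fun j => min (g j) B, fun j => sub_nonneg.2 (min_le_left _ _), add_sub_cancel _ _⟩, hαg⟩
    obtain ⟨k, hk⟩ := hg.1 j trivial
    exact ⟨min k B, mem_Iic.2 (min_le_right _ _), by simp [← hk]⟩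

theorem five_halves_smul_mem_convexHull_coverIntPoints_vecMul [DecidableEq σ] [Nonempty σ]
    [Fintype κ] (hι : Fintype.card ι ≤ 2) {M : Matrix κ σ ℝ} {v : κ → ℝ}
    (hM : ∀ i j, 0 ≤ M i j) (hMv : ∀ i j, M i j ≤ v i) {L : ι → κ → ℝ} (hL : ∀ i, 0 ≤ L i)
    {x : σ → ℝ} (hx : 0 ≤ x) (hMx : v ≤ M *ᵥ x) :
    (5 / 2 : ℝ) • x ∈ convexHull ℝ (coverIntPoints (fun i => L i ᵥ* M) fun i => L i ⬝ᵥ v) :=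
  five_halves_smul_mem_convexHull_coverIntPoints hι
    (fun i j => Finset.sum_nonneg fun k _ => mul_nonneg (hL i k) (hM k j))
    (fun i j => dotProduct_le_dotProduct_of_nonneg_left (fun k => hMv k j) (hL i)) hx
    (fun i => by
      show L i ⬝ᵥ v ≤ (L i ᵥ* M) ⬝ᵥ x
      rw [← dotProduct_mulVec]; exact dotProduct_le_dotProduct_of_nonneg_left hMx (hL i))

end Fintype

theorem coverAggIntHull2_eq {m n : ℕ} (A : Matrix (Fin m) (Fin n) ℚ) (b : Fin m → ℚ)
    (l₁ l₂ : Fin m → ℝ) :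
    coverAggIntHull2 A b l₁ l₂ = convexHull ℝ (coverIntPoints
      (fun i => ![l₁, l₂] i ᵥ* A.map (↑)) (fun i => ![l₁, l₂] i ⬝ᵥ ((↑) ∘ b))) := by
  rw [coverAggIntHull2]
  congr 1
  ext x
  simp only [coverIntPoints, natPoints, mem_inter_iff, mem_pi, mem_univ, forall_const, mem_range,
    mem_ofPred_eq, Fin.forall_fin_two, Matrix.cons_val_zero, Matrix.cons_val_one,
    ← dotProduct_mulVec, ge_iff_le, ← and_assoc, ← forall_and, Real.nonneg_and_exists_intCast_iff]
  rfl

theorem nonneg_and_le_mulVec_of_mem_coverAggIntHull2_single {m n : ℕ}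
    {A : Matrix (Fin m) (Fin n) ℚ} {b : Fin m → ℚ} {i : Fin m} {l : Fin m → ℝ} {x : Fin n → ℝ}
    (hx : x ∈ coverAggIntHull2 A b (Pi.single i 1) l) :
    0 ≤ x ∧ (b i : ℝ) ≤ (A.map (↑) *ᵥ x) i := by
  refine convexHull_min ?_ ((convex_Ici 0).inter
    (convex_halfSpace_ge ((LinearMap.proj i).comp (A.map (↑)).mulVecLin).isLinear _)) hx
  rintro w ⟨hw₀, -, hw, -⟩
  refine ⟨hw₀, ?_⟩
  simpa [Pi.single_apply, mulVec, dotProduct] using hw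

theorem covering_row2Closure_subset_smul_agg2Closure_general
    {m n : ℕ} (hm : 2 ≤ m) (hn : 0 < n)
    (A : Matrix (Fin m) (Fin n) ℚ) (b : Fin m → ℚ)
    (hA : ∀ i j, 0 ≤ A i j) (hAb : ∀ i j, A i j ≤ b i) :
    coverRow2Closure A b ⊆ (1 / 2.5 : ℝ) • coverAgg2Closure A b := by
  intro x hx
  simp only [coverRow2Closure, mem_iInter] at hx
  have : Nontrivial (Fin m) := Fin.nontrivial_iff_two_le.2 hm
  have : Nonempty (Fin n) := ⟨⟨0, hn⟩⟩
  have hrow : ∀ i, 0 ≤ x ∧ (b i : ℝ) ≤ (A.map (↑) *ᵥ x) i := fun i =>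
    let ⟨i', hi'⟩ := exists_ne i
    nonneg_and_le_mulVec_of_mem_coverAggIntHull2_single (hx i i' hi'.symm)
  refine ⟨(5 / 2 : ℝ) • x, mem_iInter₂.2 fun l₁ hl₁ => mem_iInter₂.2 fun l₂ hl₂ => ?_,
    show (1 / 2.5 : ℝ) • (5 / 2 : ℝ) • x = x by rw [smul_smul]; norm_num⟩
  rw [coverAggIntHull2_eq]
  exact five_halves_smul_mem_convexHull_coverIntPoints_vecMul (by simp)
    (fun i j => by simpa using hA i j) (fun i j => by simpa using hAb i j)
    (Fin.forall_fin_two.2 ⟨hl₁, hl₂⟩) (hrow ⟨0, by omega⟩).1 fun i => (hrow i).2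

/-- For a covering polyhedron `P = {x ≥ 0 : Ax ≥ b}` with rational data
and `m ≥ 2` constraints, `2-𝒜(P) ⊆ (1/2.5) · 𝒜₂(P)`. -/
theorem covering_row2Closure_subset_smul_agg2Closure
    {m n : ℕ} (hm : 2 ≤ m) (hn : 0 < n)
    (A : Matrix (Fin m) (Fin n) ℚ) (b : Fin m → ℚ)
    (hA : ∀ i j, 0 ≤ A i j) (hb : ∀ i, 0 ≤ b i) (hAb : ∀ i j, A i j ≤ b i) :
    coverRow2Closure A b ⊆ (1 / 2.5 : ℝ) • coverAgg2Closure A b :=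
  covering_row2Closure_subset_smul_agg2Closure_general hm hn A b hA hAb
end

section
/- Let J⁺, J⁻ be a partition of [n] with J⁺ nonempty, let a ∈ ℝⁿ with a_j > 0 for all j, let b ≥ 0 with a_j ≤ b for all j ∈ J⁺, and let P = {x ∈ ℝⁿ_+ : Σ_{j∈J⁺} a_j x_j − Σ_{j∈J⁻} a_j x_j ≤ b}. Let c ∈ ℝⁿ satisfy c_j ≥ 0 for j ∈ J⁺ and c_j ≤ 0 for j ∈ J⁻, and suppose z^{LP} := sup{cᵀx : x ∈ P} is finite. Then z^{LP} ≤ 2·z^{IP}, where z^{IP} := sup{cᵀx : x ∈ P ∩ ℤⁿ}. -/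
/-!
Write `w` for `a` with the signs of the constraint, so that `P = {x ≥ 0 | wᵀx ≤ b}`, and let
`j₀ ∈ J⁺` maximise `c_j / a_j`, with `M = c_{j₀} / a_{j₀} ≥ 0`. For `k ∈ J⁻` the direction
`a_k e_{j₀} + a_{j₀} e_k` leaves `wᵀx` unchanged, so boundedness forces `c_k ≤ -M a_k`; hence
`c ≤ M w` and `z^LP ≤ M b`. The integer point `⌊b / a_{j₀}⌋ e_{j₀}` lies in `P`, and because
`b / a_{j₀} ≥ 1` the floor loses at most half, so its value is at least `M b / 2`.
-/

/-- The sign-pattern polyhedron defined by a single non-trivial constraint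
`Σ_{j∈J⁺} a_j x_j − Σ_{j∈J⁻} a_j x_j ≤ b` together with `x ≥ 0`. -/
def oneRowPoly {n : ℕ} (Jp Jn : Finset (Fin n)) (a : Fin n → ℝ) (b : ℝ) :
    Set (Fin n → ℝ) :=
  {x | (∀ j, 0 ≤ x j) ∧ ∑ j ∈ Jp, a j * x j - ∑ j ∈ Jn, a j * x j ≤ b}

open Finset

lemma Nat.lt_two_mul_floor {R : Type*} [Semiring R] [LinearOrder R] [IsStrictOrderedRing R]
    [FloorSemiring R] {r : R} (hr : 1 ≤ r) : r < 2 * ⌊r⌋₊ := by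
  have h1 : (1 : R) ≤ ⌊r⌋₊ := by exact_mod_cast Nat.one_le_floor_iff r |>.2 hr
  calc r < ⌊r⌋₊ + 1 := Nat.lt_floor_add_one r
    _ ≤ 2 * ⌊r⌋₊ := by rw [two_mul]; gcongr

lemma nonpos_of_bddAbove_of_forall_add_mul_mem {S : Set ℝ} (hS : BddAbove S) {u s : ℝ}
    (hray : ∀ t : ℝ, 0 ≤ t → u + t * s ∈ S) : s ≤ 0 := by
  obtain ⟨ub, hub⟩ := hS
  by_contra! hs
  obtain ⟨t, ht⟩ := exists_nat_gt ((ub - u) / s)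
  have := hub (hray t t.cast_nonneg)
  rw [div_lt_iff₀ hs] at ht
  linarith

section OrthantHalfspace

variable {ι : Type*} [Fintype ι]

def orthantHalfspace (w : ι → ℝ) (b : ℝ) : Set (ι → ℝ) := {x | 0 ≤ x ∧ w ⬝ᵥ x ≤ b}

lemma dotProduct_le_mul_of_le_smul {c w : ι → ℝ} {M b : ℝ} (hM : 0 ≤ M) (hcw : c ≤ M • w)
    {x : ι → ℝ} (hx : x ∈ orthantHalfspace w b) : c ⬝ᵥ x ≤ M * b :=
  calc c ⬝ᵥ x ≤ (M • w) ⬝ᵥ x := dotProduct_le_dotProduct_of_nonneg_right hcw hx.1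
    _ = M * (w ⬝ᵥ x) := smul_dotProduct M w x
    _ ≤ M * b := mul_le_mul_of_nonneg_left hx.2 hM

lemma dotProduct_nonpos_of_bddAbove {c w : ι → ℝ} {b : ℝ} (hb : 0 ≤ b)
    (hbdd : BddAbove ((c ⬝ᵥ ·) '' orthantHalfspace w b))
    {d : ι → ℝ} (hd : 0 ≤ d) (hwd : w ⬝ᵥ d ≤ 0) : c ⬝ᵥ d ≤ 0 := by
  refine nonpos_of_bddAbove_of_forall_add_mul_mem hbdd (u := 0) fun t ht => ⟨t • d, ⟨?_, ?_⟩, ?_⟩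
  · exact smul_nonneg ht hd
  · rw [dotProduct_smul, smul_eq_mul]
    exact (mul_nonpos_of_nonneg_of_nonpos ht hwd).trans hb
  · simp [dotProduct_smul]

lemma single_floor_mem_orthantHalfspace [DecidableEq ι] {w : ι → ℝ} {b : ℝ} (hb : 0 ≤ b)
    {j : ι} (hj : 0 < w j) : Pi.single j (⌊b / w j⌋₊ : ℝ) ∈ orthantHalfspace w b := by
  refine ⟨Pi.single_nonneg.2 (Nat.cast_nonneg _), ?_⟩
  rw [dotProduct_single, ← le_div_iff₀' hj]
  exact Nat.floor_le (div_nonneg hb hj.le)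

lemma le_smul_piecewise_of_bddAbove [DecidableEq ι] {Jp : Finset ι} {a c : ι → ℝ} {b : ℝ}
    (ha : ∀ j, 0 < a j) (hb : 0 ≤ b)
    (hbdd : BddAbove ((c ⬝ᵥ ·) '' orthantHalfspace (Jp.piecewise a (-a)) b))
    {j₀ : ι} (hj₀ : j₀ ∈ Jp) (hmax : ∀ j ∈ Jp, c j / a j ≤ c j₀ / a j₀) :
    c ≤ (c j₀ / a j₀) • Jp.piecewise a (-a) := by
  intro k
  by_cases hk : k ∈ Jp
  · rw [Pi.smul_apply, piecewise_eq_of_mem _ _ _ hk, smul_eq_mul, ← div_le_iff₀ (ha k)]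
    exact hmax k hk
  · have hray := dotProduct_nonpos_of_bddAbove hb hbdd
      (d := Pi.single j₀ (a k) + Pi.single k (a j₀))
      (add_nonneg (Pi.single_nonneg.2 (ha k).le) (Pi.single_nonneg.2 (ha j₀).le))
      (by simp [dotProduct_add, dotProduct_single, hk, hj₀, mul_comm])
    simp only [dotProduct_add, dotProduct_single] at hray
    rw [Pi.smul_apply, piecewise_eq_of_notMem _ _ _ hk, smul_eq_mul, Pi.neg_apply, mul_neg,
      div_mul_eq_mul_div, le_neg, div_le_iff₀ (ha j₀)]
    linarith

end OrthantHalfspace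

lemma oneRowPoly_eq_orthantHalfspace {n : ℕ} {Jp Jn : Finset (Fin n)} (hdisj : Disjoint Jp Jn)
    (hunion : Jp ∪ Jn = univ) (a : Fin n → ℝ) (b : ℝ) :
    oneRowPoly Jp Jn a b = orthantHalfspace (Jp.piecewise a (-a)) b := by
  ext x
  suffices ∑ j ∈ Jp, a j * x j - ∑ j ∈ Jn, a j * x j = Jp.piecewise a (-a) ⬝ᵥ x by
    simp only [oneRowPoly, orthantHalfspace, Set.mem_ofPred_eq, this, Pi.le_def, Pi.zero_apply]
  rw [dotProduct, ← hunion, sum_union hdisj, sub_eq_add_neg, ← sum_neg_distrib]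
  congr 1
  · exact sum_congr rfl fun j hj => by rw [piecewise_eq_of_mem _ _ _ hj]
  · refine sum_congr rfl fun j hj => ?_
    rw [piecewise_eq_of_notMem _ _ _ (disjoint_right.1 hdisj hj), Pi.neg_apply, neg_mul]

theorem oneRow_lp_le_two_mul_ip_general {n : ℕ}
    (Jp Jn : Finset (Fin n)) (hdisj : Disjoint Jp Jn) (hunion : Jp ∪ Jn = Finset.univ)
    (hJp : Jp.Nonempty)
    (a : Fin n → ℝ) (ha : ∀ j, 0 < a j) (b : ℝ) (hb : 0 ≤ b) (hab : ∀ j ∈ Jp, a j ≤ b)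
    (c : Fin n → ℝ) (hcp : ∀ j ∈ Jp, 0 ≤ c j)
    (hbdd : BddAbove ((fun x => ∑ j, c j * x j) '' oneRowPoly Jp Jn a b)) :
    sSup ((fun x => ∑ j, c j * x j) '' oneRowPoly Jp Jn a b) ≤
      2 * sSup ((fun x => ∑ j, c j * x j) ''
        {x ∈ oneRowPoly Jp Jn a b | ∀ j, ∃ z : ℤ, x j = (z : ℝ)}) := by
  rw [oneRowPoly_eq_orthantHalfspace hdisj hunion] at hbdd ⊢
  obtain ⟨j₀, hj₀, hmax⟩ := Jp.exists_max_image (fun j => c j / a j) hJp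
  have hM : 0 ≤ c j₀ / a j₀ := div_nonneg (hcp j₀ hj₀) (ha j₀).le
  have hcw := le_smul_piecewise_of_bddAbove ha hb hbdd hj₀ hmax
  have hw₀ : Jp.piecewise a (-a) j₀ = a j₀ := piecewise_eq_of_mem _ _ _ hj₀
  have hy := single_floor_mem_orthantHalfspace hb (hw₀ ▸ ha j₀)
  rw [hw₀] at hy
  set m := ⌊b / a j₀⌋₊
  have hm : c j₀ * m ∈ (c ⬝ᵥ ·) '' {x ∈ orthantHalfspace (Jp.piecewise a (-a)) b |
      ∀ j, ∃ z : ℤ, x j = (z : ℝ)} := by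
    refine ⟨_, ⟨hy, fun j => ⟨(Pi.single j₀ (m : ℤ) : Fin n → ℤ) j, ?_⟩⟩, dotProduct_single ..⟩
    by_cases h : j = j₀ <;> simp [h]
  calc sSup _ ≤ c j₀ / a j₀ * b := by
        refine csSup_le ⟨_, 0, ⟨le_rfl, by simpa using hb⟩, rfl⟩ ?_
        rintro _ ⟨x, hx, rfl⟩
        exact dotProduct_le_mul_of_le_smul hM hcw hx
    _ = c j₀ * (b / a j₀) := by ring
    _ ≤ c j₀ * (2 * m) :=
        mul_le_mul_of_nonneg_left (Nat.lt_two_mul_floor ((one_le_div (ha j₀)).2 (hab j₀ hj₀))).le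
          (hcp j₀ hj₀)
    _ ≤ 2 * sSup _ := by
        rw [mul_left_comm]
        gcongr
        exact le_csSup (hbdd.mono (Set.image_mono (Set.sep_subset _ _))) hm

/-- For a one-constraint sign-pattern polyhedron (with `J⁺ ≠ ∅`, `a_j > 0`,
`0 ≤ b`, `a_j ≤ b` on `J⁺`) and a sign-pattern objective `c` whose supremum `z^LP` over `P`
is finite, `z^LP ≤ 2 · z^IP`, where `z^IP` is the supremum of the objective over the integer
points of `P`. -/
theorem oneRow_lp_le_two_mul_ip {n : ℕ}
    (Jp Jn : Finset (Fin n)) (hdisj : Disjoint Jp Jn) (hunion : Jp ∪ Jn = Finset.univ)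
    (hJp : Jp.Nonempty)
    (a : Fin n → ℝ) (ha : ∀ j, 0 < a j) (b : ℝ) (hb : 0 ≤ b) (hab : ∀ j ∈ Jp, a j ≤ b)
    (c : Fin n → ℝ) (hcp : ∀ j ∈ Jp, 0 ≤ c j) (hcn : ∀ j ∈ Jn, c j ≤ 0)
    (hbdd : BddAbove ((fun x => ∑ j, c j * x j) '' oneRowPoly Jp Jn a b)) :
    sSup ((fun x => ∑ j, c j * x j) '' oneRowPoly Jp Jn a b) ≤
      2 * sSup ((fun x => ∑ j, c j * x j) ''
        {x ∈ oneRowPoly Jp Jn a b | ∀ j, ∃ z : ℤ, x j = (z : ℝ)}) :=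
  oneRow_lp_le_two_mul_ip_general Jp Jn hdisj hunion hJp a ha b hb hab c hcp hbdd
end

section
/- Let P be a (J⁺,J⁻) sign-pattern polyhedron in ℝⁿ defined by rational data, and let P^I := conv(P ∩ ℤⁿ). Then P^I can be written as the set of x ∈ ℝⁿ_+ satisfying finitely many inequalities Σ_{j∈[n]} a_j x_j ≤ β each of which has the same sign pattern, i.e., a_j ≥ 0 for all j ∈ J⁺ and a_j ≤ 0 for all j ∈ J⁻ in every such inequality. -/
/-!
Scaling the rational data to integers and adding slack variables, the integer points of `P`
become the image of the solutions `w ∈ ℕ^(n+m)` of a system `F w = G w + c` of ℕ-linear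
equations. By Dickson's lemma there are finitely many minimal solutions, and the homogeneous
solutions form a finitely generated monoid (Gordan's lemma), so `P^I = conv V + cone R` for finite
`V` and `R`; Fourier–Motzkin elimination shows that such a set is a polyhedron. The integer points
of `P` stay in `P` when a `J⁻` coordinate is raised by one, so every valid inequality has
nonpositive `J⁻` coefficients; they also stay in `P` when `J⁺` coordinates are set to zero, so a
negative `J⁺` coefficient can be raised to zero without losing validity, and on `x ≥ 0` this only
strengthens the inequality.
-/

open scoped Pointwise

section Polyhedral

variable {E F : Type*} [AddCommGroup E] [Module ℝ E] [AddCommGroup F] [Module ℝ F]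

def IsPolyhedral (X : Set E) : Prop :=
  ∃ C : Set (Module.Dual ℝ E × ℝ), C.Finite ∧ X = {x | ∀ p ∈ C, p.1 x ≤ p.2}

theorem IsPolyhedral.convex {X : Set E} (hX : IsPolyhedral X) : Convex ℝ X := by
  obtain ⟨C, -, rfl⟩ := hX
  simp only [Set.ofPred_forall]
  exact convex_iInter₂ fun p _ => convex_halfSpace_le p.1.isLinear p.2

theorem isPolyhedral_setOf_le (f : Module.Dual ℝ E) (d : ℝ) : IsPolyhedral {x | f x ≤ d} :=
  ⟨{(f, d)}, Set.finite_singleton _, by simp⟩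

theorem IsPolyhedral.inter {X Y : Set E} (hX : IsPolyhedral X) (hY : IsPolyhedral Y) :
    IsPolyhedral (X ∩ Y) := by
  obtain ⟨C, hC, rfl⟩ := hX
  obtain ⟨D, hD, rfl⟩ := hY
  refine ⟨C ∪ D, hC.union hD, ?_⟩
  ext x
  simp [or_imp, forall_and]

theorem isPolyhedral_iInter {ι : Type*} [Finite ι] {X : ι → Set E}
    (hX : ∀ i, IsPolyhedral (X i)) : IsPolyhedral (⋂ i, X i) := by
  choose C hC hXC using hX
  refine ⟨⋃ i, C i, Set.finite_iUnion hC, ?_⟩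
  ext x
  simp only [hXC, Set.mem_iInter, Set.mem_ofPred_eq, Set.mem_iUnion, forall_exists_index]
  exact forall_comm

theorem IsPolyhedral.preimage {X : Set F} (hX : IsPolyhedral X) (L : E →ₗ[ℝ] F) :
    IsPolyhedral (L ⁻¹' X) := by
  obtain ⟨C, hC, rfl⟩ := hX
  refine ⟨(fun p => (p.1 ∘ₗ L, p.2)) '' C, hC.image _, ?_⟩
  ext x
  simp only [Set.mem_preimage, Set.mem_ofPred_eq, Set.forall_mem_image, LinearMap.comp_apply]

theorem isPolyhedral_ker [FiniteDimensional ℝ F] (L : E →ₗ[ℝ] F) :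
    IsPolyhedral (LinearMap.ker L : Set E) := by
  let b := Module.finBasis ℝ F
  have hker : (LinearMap.ker L : Set E) =
      ⋂ i, {x | (b.coord i ∘ₗ L) x ≤ 0} ∩ {x | (-(b.coord i ∘ₗ L)) x ≤ 0} := by
    ext x
    simp only [SetLike.mem_coe, LinearMap.mem_ker, Set.mem_iInter, Set.mem_inter_iff,
      Set.mem_ofPred_eq, LinearMap.comp_apply, LinearMap.neg_apply, neg_nonpos,
      ← le_antisymm_iff, b.forall_coord_eq_zero_iff]
  rw [hker]
  exact isPolyhedral_iInter fun i => (isPolyhedral_setOf_le _ _).inter (isPolyhedral_setOf_le _ _)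

theorem exists_between_of_finite {L U : Set ℝ} (hL : L.Finite) (hU : U.Finite)
    (h : ∀ l ∈ L, ∀ u ∈ U, l ≤ u) : ∃ t, (∀ l ∈ L, l ≤ t) ∧ ∀ u ∈ U, t ≤ u := by
  rcases L.eq_empty_or_nonempty with rfl | hne
  · obtain ⟨t, ht⟩ := hU.bddBelow
    exact ⟨t, by simp, ht⟩
  · exact ⟨sSup L, fun l hl => le_csSup hL.bddAbove hl,
      fun u hu => csSup_le hne fun l hl => h l hl u hu⟩

/-- Fourier–Motzkin elimination: the constraints not involving `e` are kept, and every constraint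
bounding `t` from above is combined with every one bounding it from below. -/
theorem IsPolyhedral.exists_add_smul {X : Set E} (hX : IsPolyhedral X) (e : E) :
    IsPolyhedral {x | ∃ t : ℝ, x + t • e ∈ X} := by
  obtain ⟨C, hC, rfl⟩ := hX
  let combine (p q : Module.Dual ℝ E × ℝ) : Module.Dual ℝ E × ℝ :=
    (-q.1 e • p.1 + p.1 e • q.1, -q.1 e * p.2 + p.1 e * q.2)
  refine ⟨{p ∈ C | p.1 e = 0} ∪ Set.image2 combine {p ∈ C | 0 < p.1 e} {q ∈ C | q.1 e < 0},
    (hC.sep _).union ((hC.sep _).image2 _ (hC.sep _)), ?_⟩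
  ext x
  simp only [Set.mem_ofPred_eq, map_add, map_smul, smul_eq_mul]
  constructor
  · rintro ⟨t, ht⟩ p (⟨hp, hpe⟩ | ⟨p, ⟨hp, hpe⟩, q, ⟨hq, hqe⟩, rfl⟩)
    · simpa [hpe] using ht p hp
    · have hpt := ht p hp
      have hqt := ht q hq
      simp only [combine, LinearMap.add_apply, LinearMap.smul_apply, smul_eq_mul]
      nlinarith
  · intro h
    have hbounds : ∀ l ∈ (fun q => (q.1 x - q.2) / -q.1 e) '' {q ∈ C | q.1 e < 0},
        ∀ u ∈ (fun p => (p.2 - p.1 x) / p.1 e) '' {p ∈ C | 0 < p.1 e}, l ≤ u := by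
      rintro _ ⟨q, ⟨hq, hqe⟩, rfl⟩ _ ⟨p, ⟨hp, hpe⟩, rfl⟩
      have := h _ (Or.inr ⟨p, ⟨hp, hpe⟩, q, ⟨hq, hqe⟩, rfl⟩)
      simp only [combine, LinearMap.add_apply, LinearMap.smul_apply, smul_eq_mul] at this
      rw [div_le_div_iff₀ (neg_pos.2 hqe) hpe]
      linarith
    obtain ⟨t, hlow, hupp⟩ :=
      exists_between_of_finite ((hC.sep _).image _) ((hC.sep _).image _) hbounds
    refine ⟨t, fun p hp => ?_⟩
    rcases lt_trichotomy (p.1 e) 0 with hpe | hpe | hpe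
    · have := hlow _ ⟨p, ⟨hp, hpe⟩, rfl⟩
      rw [div_le_iff₀ (neg_pos.2 hpe)] at this
      linarith
    · simpa [hpe] using h p (Or.inl ⟨hp, hpe⟩)
    · have := hupp _ ⟨p, ⟨hp, hpe⟩, rfl⟩
      rw [le_div_iff₀ hpe] at this
      linarith

theorem IsPolyhedral.exists_add_sum_smul {X : Set E} (hX : IsPolyhedral X) {ι : Type*}
    [Fintype ι] (e : ι → E) : IsPolyhedral {x | ∃ w : ι → ℝ, x + ∑ i, w i • e i ∈ X} := by
  classical
  suffices ∀ s : Finset ι, IsPolyhedral {x | ∃ w : ι → ℝ, x + ∑ i ∈ s, w i • e i ∈ X} from this _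
  intro s
  induction s using Finset.induction_on with
  | empty => simpa using hX
  | insert i s hi ih =>
    convert ih.exists_add_smul (e i) using 1
    ext x
    simp only [Finset.sum_insert hi, Set.mem_ofPred_eq, ← add_assoc]
    constructor
    · rintro ⟨w, hw⟩
      exact ⟨w i, w, hw⟩
    · rintro ⟨t, w, hw⟩
      refine ⟨Function.update w i t, ?_⟩
      rwa [Function.update_self, Finset.sum_congr rfl fun j hj => by
        rw [Function.update_of_ne (ne_of_mem_of_not_mem hj hi)]]

theorem IsPolyhedral.image [FiniteDimensional ℝ E] [FiniteDimensional ℝ F] {X : Set E}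
    (hX : IsPolyhedral X) (L : E →ₗ[ℝ] F) : IsPolyhedral (L '' X) := by
  -- project the graph of `L` over `X` to `F` by eliminating the directions of a basis of `E`
  let b := Module.finBasis ℝ E
  have hgraph : IsPolyhedral (LinearMap.snd ℝ F E ⁻¹' X ∩
      LinearMap.ker (LinearMap.fst ℝ F E - L ∘ₗ LinearMap.snd ℝ F E)) :=
    (hX.preimage _).inter (isPolyhedral_ker _)
  convert (hgraph.exists_add_sum_smul fun i => ((0 : F), b i)).preimage (LinearMap.inl ℝ F E)
    using 1
  ext y
  simp only [Set.mem_image, Set.mem_preimage, Set.mem_ofPred_eq, Set.mem_inter_iff,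
    SetLike.mem_coe, LinearMap.mem_ker]
  constructor
  · rintro ⟨x, hx, rfl⟩
    refine ⟨b.equivFun x, ?_⟩
    simp [Prod.fst_sum, Prod.snd_sum, hx]
  · rintro ⟨w, hw, hwL⟩
    refine ⟨∑ i, w i • b i, by simpa [Prod.snd_sum] using hw, ?_⟩
    have hy : y - ∑ i, w i • L (b i) = 0 := by simpa [Prod.fst_sum, Prod.snd_sum] using hwL
    simpa using (sub_eq_zero.1 hy).symm

end Polyhedral

section VPolyhedron

variable {E : Type*} [AddCommGroup E] [Module ℝ E] {ι κ : Type*} [Fintype ι] [Fintype κ]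

/-- `conv {v i} + cone {r k}`, described through the coefficients. -/
def vPolyhedron (v : ι → E) (r : κ → E) : Set E :=
  {x | ∃ μ : ι → ℝ, ∃ ν : κ → ℝ, (∀ i, 0 ≤ μ i) ∧ ∑ i, μ i = 1 ∧ (∀ k, 0 ≤ ν k) ∧
    ∑ i, μ i • v i + ∑ k, ν k • r k = x}

theorem isPolyhedral_vPolyhedron [FiniteDimensional ℝ E] (v : ι → E) (r : κ → E) :
    IsPolyhedral (vPolyhedron v r) := by
  let μ (i : ι) : Module.Dual ℝ ((ι → ℝ) × (κ → ℝ)) := LinearMap.proj i ∘ₗ LinearMap.fst ℝ _ _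
  let ν (k : κ) : Module.Dual ℝ ((ι → ℝ) × (κ → ℝ)) := LinearMap.proj k ∘ₗ LinearMap.snd ℝ _ _
  have hweights : IsPolyhedral ((⋂ i, {w | (-μ i) w ≤ 0}) ∩
      ({w | (∑ i, μ i) w ≤ 1} ∩ {w | (-∑ i, μ i) w ≤ -1}) ∩ ⋂ k, {w | (-ν k) w ≤ 0}) :=
    ((isPolyhedral_iInter fun _ => isPolyhedral_setOf_le _ _).inter
      ((isPolyhedral_setOf_le _ _).inter (isPolyhedral_setOf_le _ _))).inter
      (isPolyhedral_iInter fun _ => isPolyhedral_setOf_le _ _)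
  convert hweights.image
    ((Fintype.linearCombination ℝ v).coprod (Fintype.linearCombination ℝ r)) using 1
  ext x
  simp [vPolyhedron, μ, ν, le_antisymm_iff, and_assoc, Fintype.linearCombination_apply]

theorem add_sum_nsmul_mem_vPolyhedron [DecidableEq ι] (v : ι → E) (r : κ → E) (i : ι)
    (a : κ → ℕ) : v i + ∑ k, a k • r k ∈ vPolyhedron v r :=
  ⟨Pi.single i 1, fun k => a k, fun j => by by_cases h : j = i <;> simp [h], by simp,
    fun k => by positivity, by simp [Pi.single_apply, Nat.cast_smul_eq_nsmul]⟩

theorem Convex.add_smul_mem_of_forall_add_mem {C : Set E} (hC : Convex ℝ C) {z : E}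
    (hz : ∀ y ∈ C, y + z ∈ C) {c : ℝ} (hc : 0 ≤ c) {y : E} (hy : y ∈ C) : y + c • z ∈ C := by
  have hnat : ∀ N : ℕ, y + (N : ℝ) • z ∈ C := by
    intro N
    induction N with
    | zero => simpa using hy
    | succ N ih => simpa [add_smul, add_assoc] using hz _ ih
  have hfract : c - ⌊c⌋₊ ∈ Set.Icc (0 : ℝ) 1 :=
    ⟨by linarith [Nat.floor_le hc], by linarith [Nat.lt_floor_add_one c]⟩
  have := hC.add_smul_mem (hnat ⌊c⌋₊)
    (by simpa [add_smul, add_assoc] using hnat (⌊c⌋₊ + 1)) hfract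
  rwa [add_assoc, ← add_smul, add_sub_cancel] at this

theorem vPolyhedron_subset_convexHull {S : Set E} {v : ι → E} {r : κ → E}
    (hv : ∀ i, v i ∈ S) (hr : ∀ k, ∀ s ∈ S, s + r k ∈ S) :
    vPolyhedron v r ⊆ convexHull ℝ S := by
  rintro _ ⟨μ, ν, hμ, hμ1, hν, rfl⟩
  have hr_hull : ∀ k, ∀ y ∈ convexHull ℝ S, y + r k ∈ convexHull ℝ S := by
    intro k y hy
    have hS : S + {r k} ⊆ S := by
      rintro _ ⟨s, hs, _, rfl, rfl⟩
      exact hr k s hs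
    refine convexHull_mono hS ?_
    rw [convexHull_add]
    exact Set.add_mem_add hy (subset_convexHull ℝ _ rfl)
  have hhull : ∑ i, μ i • v i ∈ convexHull ℝ S :=
    (convex_convexHull ℝ S).sum_mem (fun i _ => hμ i) hμ1 fun i _ => subset_convexHull ℝ S (hv i)
  refine Finset.sum_induction _ (fun z => ∀ y ∈ convexHull ℝ S, y + z ∈ convexHull ℝ S)
    (fun a b ha hb y hy => by simpa [add_assoc] using hb _ (ha y hy)) (by simp)
    (fun k _ y hy => (convex_convexHull ℝ S).add_smul_mem_of_forall_add_mem (hr_hull k) (hν k) hy)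
    _ hhull

end VPolyhedron

section Semilinear

variable {M N : Type*} [AddCommMonoid M] [PartialOrder M] [WellQuasiOrderedLE M]
  [CanonicallyOrderedAdd M] [AddCommMonoid N] [IsCancelAdd N]

theorem exists_finset_eq_add_mem_eqLocusM (F G : M →+ N) (c : N) :
    ∃ V : Finset M, (∀ v ∈ V, F v = G v + c) ∧
      ∀ w, F w = G w + c → ∃ v ∈ V, ∃ u ∈ F.eqLocusM G, w = v + u := by
  let T := {w | F w = G w + c}
  have hT : T.IsPWO := Set.isPWO_of_wellQuasiOrderedLE T
  have hmin : {w | Minimal (· ∈ T) w}.Finite :=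
    (setOfPred_minimal_antichain _).finite_of_partiallyWellOrderedOn
      (hT.mono (setOfPred_minimal_subset T))
  refine ⟨hmin.toFinset, fun v hv => (hmin.mem_toFinset.1 hv).prop, fun w hw => ?_⟩
  obtain ⟨v, hvw, hv⟩ := hT.exists_le_minimal hw
  obtain ⟨u, rfl⟩ := exists_add_of_le hvw
  refine ⟨v, hmin.mem_toFinset.2 hv, u, ?_, rfl⟩
  have hvT : F v = G v + c := hv.prop
  rw [map_add, map_add, hvT, add_right_comm (G v) (G u) c] at hw
  exact add_left_cancel hw

theorem isPolyhedral_convexHull_image [IsOrderedCancelAddMonoid M] {E : Type*} [AddCommGroup E]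
    [Module ℝ E] [FiniteDimensional ℝ E] (F G : M →+ N) (c : N) (ρ : M →+ E) :
    IsPolyhedral (convexHull ℝ (ρ '' {w | F w = G w + c})) := by
  classical
  obtain ⟨V, hV, hdecomp⟩ := exists_finset_eq_add_mem_eqLocusM F G c
  obtain ⟨R, hR⟩ := AddSubmonoid.fg_eqLocusM F G
  have hRsol : ∀ r ∈ R, F r = G r := fun r hr =>
    AddMonoidHom.mem_eqLocusM.1 (hR ▸ AddSubmonoid.subset_closure hr)
  suffices convexHull ℝ (ρ '' {w | F w = G w + c}) =
      vPolyhedron (fun v : V => ρ v) (fun r : R => ρ r) from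
    this ▸ isPolyhedral_vPolyhedron _ _
  refine subset_antisymm (convexHull_min ?_ (isPolyhedral_vPolyhedron _ _).convex)
    (vPolyhedron_subset_convexHull (fun v => ⟨v, hV v v.2, rfl⟩) ?_)
  · rintro _ ⟨w, hw, rfl⟩
    obtain ⟨v, hv, u, hu, rfl⟩ := hdecomp w hw
    rw [← hR, AddSubmonoid.mem_closure_finset'] at hu
    obtain ⟨a, rfl⟩ := hu
    simpa using add_sum_nsmul_mem_vPolyhedron (fun v : V => ρ v) (fun r : R => ρ r) ⟨v, hv⟩ a
  · rintro ⟨r, hr⟩ _ ⟨w, hw, rfl⟩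
    refine ⟨w + r, ?_, map_add ρ w r⟩
    change F (w + r) = G (w + r) + c
    rw [map_add, map_add, hw, hRsol r hr, add_right_comm]

end Semilinear

section SignPattern

variable {ι : Type*} [Fintype ι] [DecidableEq ι]

theorem IsPolyhedral.exists_dotProduct {X : Set (ι → ℝ)} (hX : IsPolyhedral X) :
    ∃ C : Set ((ι → ℝ) × ℝ), C.Finite ∧ X = {x | ∀ p ∈ C, p.1 ⬝ᵥ x ≤ p.2} := by
  obtain ⟨C, hC, rfl⟩ := hX
  refine ⟨(fun p => ((dotProductEquiv ℝ ι).symm p.1, p.2)) '' C, hC.image _, ?_⟩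
  ext x
  simp only [Set.mem_ofPred_eq, Set.forall_mem_image]
  refine forall₂_congr fun p _ => ?_
  rw [← dotProductEquiv_apply_apply, LinearEquiv.apply_symm_apply]

def posPartOn (J : Finset ι) (c : ι → ℝ) : ι → ℝ :=
  fun j => if j ∈ J then max (c j) 0 else c j

theorem dotProduct_le_posPartOn_dotProduct (J : Finset ι) (c : ι → ℝ) {x : ι → ℝ}
    (hx : ∀ j, 0 ≤ x j) : c ⬝ᵥ x ≤ posPartOn J c ⬝ᵥ x :=
  Finset.sum_le_sum fun j _ => by
    unfold posPartOn
    split_ifs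
    · exact mul_le_mul_of_nonneg_right (le_max_left _ _) (hx j)
    · rfl

/-- Zeroing the coordinates in `J` where `c` is negative turns `c ⬝ᵥ s` into
`posPartOn J c ⬝ᵥ s`. -/
theorem posPartOn_dotProduct_le {J : Finset ι} {S : Set (ι → ℝ)}
    (hS : ∀ s ∈ S, ∀ y : ι → ℝ, (∀ j, y j = s j ∨ j ∈ J ∧ y j = 0) → y ∈ S)
    {c : ι → ℝ} {d : ℝ} (hc : ∀ s ∈ S, c ⬝ᵥ s ≤ d) : ∀ s ∈ S, posPartOn J c ⬝ᵥ s ≤ d := by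
  intro s hs
  let y : ι → ℝ := fun j => if j ∈ J ∧ c j < 0 then 0 else s j
  have hy : y ∈ S := hS s hs y fun j => by
    by_cases h : j ∈ J ∧ c j < 0 <;> simp [y, h]
  refine le_of_eq_of_le (Finset.sum_congr rfl fun j _ => ?_) (hc y hy)
  by_cases hj : j ∈ J <;> by_cases hcj : c j < 0 <;>
    simp [posPartOn, y, hj, hcj, le_of_lt, not_lt.1]

theorem nonpos_of_forall_dotProduct_le {S : Set (ι → ℝ)} (hS : S.Nonempty) {j : ι}
    (hj : ∀ s ∈ S, s + Pi.single j 1 ∈ S) {c : ι → ℝ} {d : ℝ} (hc : ∀ s ∈ S, c ⬝ᵥ s ≤ d) :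
    c j ≤ 0 := by
  obtain ⟨s, hs⟩ := hS
  have hray : ∀ N : ℕ, s + (N : ℝ) • Pi.single j 1 ∈ S := by
    intro N
    induction N with
    | zero => simpa using hs
    | succ N ih => simpa [add_smul, add_assoc] using hj _ ih
  by_contra! hcj
  obtain ⟨N, hN⟩ := exists_nat_gt ((d - c ⬝ᵥ s) / c j)
  have := hc _ (hray N)
  rw [dotProduct_add, dotProduct_smul, dotProduct_single, smul_eq_mul, mul_one] at this
  rw [div_lt_iff₀ hcj] at hN
  linarith

theorem exists_signPattern_eq_convexHull (Jp : Finset ι) {S : Set (ι → ℝ)} (hS : S.Nonempty)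
    (hS_nonneg : ∀ s ∈ S, ∀ j, 0 ≤ s j) (hS_add : ∀ s ∈ S, ∀ j ∉ Jp, s + Pi.single j 1 ∈ S)
    (hS_zero : ∀ s ∈ S, ∀ y : ι → ℝ, (∀ j, y j = s j ∨ j ∈ Jp ∧ y j = 0) → y ∈ S)
    (hpoly : IsPolyhedral (convexHull ℝ S)) :
    ∃ (k : ℕ) (a : Fin k → ι → ℝ) (β : Fin k → ℝ),
      (∀ i, (∀ j ∈ Jp, 0 ≤ a i j) ∧ ∀ j ∉ Jp, a i j ≤ 0) ∧
      convexHull ℝ S = {x | (∀ j, 0 ≤ x j) ∧ ∀ i, ∑ j, a i j * x j ≤ β i} := by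
  obtain ⟨C, hC, hCS⟩ := hpoly.exists_dotProduct
  have hvalid : ∀ p ∈ C, ∀ s ∈ S, p.1 ⬝ᵥ s ≤ p.2 := by
    intro p hp s hs
    have hs' := subset_convexHull ℝ S hs
    rw [hCS] at hs'
    exact hs' p hp
  obtain ⟨k, e, rfl⟩ := hC.fin_embedding
  refine ⟨k, fun i => posPartOn Jp (e i).1, fun i => (e i).2, fun i => ⟨?_, ?_⟩,
    subset_antisymm ?_ ?_⟩
  · intro j hj
    simp [posPartOn, hj]
  · intro j hj
    simpa [posPartOn, hj] using
      nonpos_of_forall_dotProduct_le hS (hS_add · · j hj) (hvalid _ ⟨i, rfl⟩)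
  · refine fun x hx => ⟨convexHull_min hS_nonneg (convex_Ici 0) hx, fun i => ?_⟩
    exact convexHull_min (posPartOn_dotProduct_le hS_zero (hvalid _ ⟨i, rfl⟩))
      (convex_halfSpace_le (dotProductBilin ℝ ℝ (posPartOn Jp (e i).1)).isLinear _) hx
  · rintro x ⟨hx0, hx⟩
    rw [hCS]
    rintro _ ⟨i, rfl⟩
    exact (dotProduct_le_posPartOn_dotProduct Jp _ hx0).trans (hx i)

end SignPattern

theorem exists_nat_mul_eq_natCast {ι : Type*} [Fintype ι] (q : ι → ℚ) (hq : ∀ i, 0 ≤ q i) :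
    ∃ D : ℕ, 0 < D ∧ ∀ i, ∃ N : ℕ, (D : ℚ) * q i = N := by
  refine ⟨∏ i, (q i).den, Finset.prod_pos fun i _ => (q i).den_pos, fun i => ?_⟩
  obtain ⟨D', hD'⟩ := Finset.dvd_prod_of_mem (fun i => (q i).den) (Finset.mem_univ i)
  have hnum : ((q i).num.toNat : ℚ) = (q i).num := by
    exact_mod_cast Int.toNat_of_nonneg (Rat.num_nonneg.2 (hq i))
  refine ⟨D' * (q i).num.toNat, ?_⟩
  rw [hD', Nat.cast_mul, Nat.cast_mul, hnum, ← Rat.mul_den_eq_num]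
  ring

def integerPoints {ι : Type*} (X : Set (ι → ℝ)) : Set (ι → ℝ) :=
  {x ∈ X | ∀ j, ∃ z : ℤ, x j = z}

theorem integerPoints_eq_image_natCast {ι : Type*} {X : Set (ι → ℝ)}
    (hX : ∀ x ∈ X, ∀ j, 0 ≤ x j) :
    integerPoints X = (fun y j => (y j : ℝ)) '' {y : ι → ℕ | (fun j => (y j : ℝ)) ∈ X} := by
  ext x
  constructor
  · rintro ⟨hx, hxz⟩
    choose z hz using hxz
    have hcast : (fun j => ((z j).toNat : ℝ)) = x := funext fun j => by
      have hzj : 0 ≤ z j := by exact_mod_cast hz j ▸ hX x hx j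
      rw [hz j]
      exact_mod_cast Int.toNat_of_nonneg hzj
    exact ⟨fun j => (z j).toNat, by simpa [hcast] using hx, hcast⟩
  · rintro ⟨y, hy, rfl⟩
    exact ⟨hy, fun j => ⟨y j, by simp⟩⟩

section SignPatternPoly

variable {m n : ℕ} {A : Matrix (Fin m) (Fin n) ℚ} {b : Fin m → ℚ} {Jp : Finset (Fin n)}

theorem zero_mem_integerPoints_signPatternPoly (hb : ∀ i, 0 ≤ b i) :
    0 ∈ integerPoints (signPatternPoly A b Jp) :=
  ⟨⟨fun _ => le_rfl, fun i => by simpa using hb i⟩, fun _ => ⟨0, by simp⟩⟩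

theorem add_single_mem_integerPoints_signPatternPoly (hA : ∀ i j, 0 ≤ A i j) {x : Fin n → ℝ}
    (hx : x ∈ integerPoints (signPatternPoly A b Jp)) {j : Fin n} (hj : j ∉ Jp) :
    x + Pi.single j 1 ∈ integerPoints (signPatternPoly A b Jp) := by
  obtain ⟨⟨hx0, hxb⟩, hxz⟩ := hx
  refine ⟨⟨fun k => ?_, fun i => ?_⟩, fun k => ?_⟩
  · exact add_nonneg (hx0 k) (by by_cases hk : k = j <;> simp [hk])
  · have hsigned : signedRow A Jp i j ≤ 0 := by simp [signedRow, hj, hA i j]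
    simpa [mul_add, Finset.sum_add_distrib, Pi.single_apply] using
      add_le_of_le_of_nonpos (hxb i) hsigned
  · obtain ⟨z, hz⟩ := hxz k
    by_cases hk : k = j
    · exact ⟨z + 1, by simp [hk, ← hz]⟩
    · exact ⟨z, by simp [hk, hz]⟩

theorem mem_integerPoints_signPatternPoly_of_zero_on (hA : ∀ i j, 0 ≤ A i j) {x y : Fin n → ℝ}
    (hx : x ∈ integerPoints (signPatternPoly A b Jp)) (hy : ∀ j, y j = x j ∨ j ∈ Jp ∧ y j = 0) :
    y ∈ integerPoints (signPatternPoly A b Jp) := by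
  obtain ⟨⟨hx0, hxb⟩, hxz⟩ := hx
  refine ⟨⟨fun j => ?_, fun i => (Finset.sum_le_sum fun j _ => ?_).trans (hxb i)⟩, fun j => ?_⟩
  · rcases hy j with h | h <;> simp [h, hx0 j]
  · rcases hy j with h | ⟨hj, h⟩
    · rw [h]
    · rw [h, mul_zero]
      exact mul_nonneg (by simp [signedRow, hj, hA i j]) (hx0 j)
  · rcases hy j with h | h
    · exact h ▸ hxz j
    · exact ⟨0, by simp [h.2]⟩

theorem natCast_mem_signPatternPoly_iff {D : ℕ} (hD : 0 < D) {A' : Matrix (Fin m) (Fin n) ℕ}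
    {c : Fin m → ℕ} (hA' : ∀ i j, (D : ℚ) * A i j = A' i j) (hc : ∀ i, (D : ℚ) * b i = c i)
    (y : Fin n → ℕ) :
    (fun j => (y j : ℝ)) ∈ signPatternPoly A b Jp ↔
      (Matrix.of fun i j => if j ∈ Jp then A' i j else 0).mulVec y ≤
        (Matrix.of fun i j => if j ∈ Jp then 0 else A' i j).mulVec y + c := by
  simp only [signPatternPoly, Set.mem_ofPred_eq, Nat.cast_nonneg, implies_true, true_and,
    Pi.le_def]
  refine forall_congr' fun i => ?_
  have hrow : (D : ℝ) * ∑ j, signedRow A Jp i j * y j =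
      ∑ j, ((if j ∈ Jp then A' i j else 0 : ℕ) : ℝ) * y j -
        ∑ j, ((if j ∈ Jp then 0 else A' i j : ℕ) : ℝ) * y j := by
    rw [Finset.mul_sum, ← Finset.sum_sub_distrib]
    refine Finset.sum_congr rfl fun j _ => ?_
    have hA'ij : (D : ℝ) * A i j = A' i j := by exact_mod_cast hA' i j
    by_cases hj : j ∈ Jp <;> simp [signedRow, hj, ← hA'ij] <;> ring
  have hci : (D : ℝ) * b i = c i := by exact_mod_cast hc i
  rw [← mul_le_mul_iff_of_pos_left (Nat.cast_pos.2 hD : (0 : ℝ) < D), hrow, hci,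
    sub_le_iff_le_add]
  simp only [Matrix.mulVec, dotProduct, Matrix.of_apply, Pi.add_apply]
  rw [add_comm]
  exact_mod_cast Iff.rfl

theorem exists_addMonoidHom_image_eq_integerPoints (hA : ∀ i j, 0 ≤ A i j) (hb : ∀ i, 0 ≤ b i) :
    ∃ (F G : (Fin n → ℕ) × (Fin m → ℕ) →+ (Fin m → ℕ)) (c : Fin m → ℕ)
      (ρ : (Fin n → ℕ) × (Fin m → ℕ) →+ (Fin n → ℝ)),
      ρ '' {w | F w = G w + c} = integerPoints (signPatternPoly A b Jp) := by
  obtain ⟨D, hD, hscale⟩ := exists_nat_mul_eq_natCast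
    (Sum.elim (fun ij : Fin m × Fin n => A ij.1 ij.2) b) (by rintro (ij | i) <;> simp [hA, hb])
  choose N hN using hscale
  let A' : Matrix (Fin m) (Fin n) ℕ := fun i j => N (.inl (i, j))
  let c : Fin m → ℕ := fun i => N (.inr i)
  have hmem := natCast_mem_signPatternPoly_iff (A := A) (b := b) (Jp := Jp) hD (A' := A') (c := c)
    (fun i j => hN (.inl (i, j))) (fun i => hN (.inr i))
  refine ⟨(Matrix.mulVecLin (.of fun i j => if j ∈ Jp then A' i j else 0)).toAddMonoidHom.comp
      (AddMonoidHom.fst _ _) + AddMonoidHom.snd _ _,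
    (Matrix.mulVecLin (.of fun i j => if j ∈ Jp then 0 else A' i j)).toAddMonoidHom.comp
      (AddMonoidHom.fst _ _), c,
    ((Nat.castAddMonoidHom ℝ).compLeft (Fin n)).comp (AddMonoidHom.fst _ _), ?_⟩
  rw [integerPoints_eq_image_natCast fun x hx => hx.1]
  ext x
  simp only [Set.mem_image, Set.mem_ofPred_eq, hmem]
  constructor
  · rintro ⟨⟨y, s⟩, hw, rfl⟩
    exact ⟨y, hw ▸ le_self_add, rfl⟩
  · rintro ⟨y, hy, rfl⟩
    obtain ⟨s, hs⟩ := exists_add_of_le hy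
    exact ⟨(y, s), hs.symm, rfl⟩

end SignPatternPoly

theorem signPattern_integerHull_is_signPattern_general
    {m n : ℕ}
    (Jp Jn : Finset (Fin n)) (hdisj : Disjoint Jp Jn)
    (A : Matrix (Fin m) (Fin n) ℚ) (b : Fin m → ℚ)
    (hA : ∀ i j, 0 ≤ A i j) (hb : ∀ i, 0 ≤ b i) :
    ∃ (k : ℕ) (a : Fin k → Fin n → ℝ) (β : Fin k → ℝ),
      (∀ i : Fin k, (∀ j ∈ Jp, 0 ≤ a i j) ∧ (∀ j ∈ Jn, a i j ≤ 0)) ∧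
      convexHull ℝ {x ∈ signPatternPoly A b Jp | ∀ j, ∃ z : ℤ, x j = (z : ℝ)} =
        {x : Fin n → ℝ | (∀ j, 0 ≤ x j) ∧ ∀ i : Fin k, ∑ j, a i j * x j ≤ β i} := by
  obtain ⟨F, G, c, ρ, hρ⟩ := exists_addMonoidHom_image_eq_integerPoints (Jp := Jp) hA hb
  have hpoly : IsPolyhedral (convexHull ℝ (integerPoints (signPatternPoly A b Jp))) :=
    hρ ▸ isPolyhedral_convexHull_image F G c ρ
  obtain ⟨k, a, β, hsign, hhull⟩ := exists_signPattern_eq_convexHull Jp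
    ⟨0, zero_mem_integerPoints_signPatternPoly hb⟩ (fun x hx => hx.1.1)
    (fun x hx j hj => add_single_mem_integerPoints_signPatternPoly hA hx hj)
    (fun x hx y hy => mem_integerPoints_signPatternPoly_of_zero_on hA hx hy) hpoly
  exact ⟨k, a, β, fun i => ⟨(hsign i).1, fun j hj =>
    (hsign i).2 j (Finset.disjoint_right.1 hdisj hj)⟩, hhull⟩

/-- The integer hull `P^I = conv(P ∩ ℤⁿ)` of a `(J⁺,J⁻)` sign-pattern
polyhedron with rational data is again described by nonnegativity constraints together with
finitely many inequalities `Σ_j a_j x_j ≤ β`, each having the same sign pattern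
(`a_j ≥ 0` for `j ∈ J⁺` and `a_j ≤ 0` for `j ∈ J⁻`). -/
theorem signPattern_integerHull_is_signPattern
    {m n : ℕ} (hm : 0 < m) (hn : 0 < n)
    (Jp Jn : Finset (Fin n)) (hdisj : Disjoint Jp Jn) (hunion : Jp ∪ Jn = Finset.univ)
    (A : Matrix (Fin m) (Fin n) ℚ) (b : Fin m → ℚ)
    (hA : ∀ i j, 0 ≤ A i j) (hb : ∀ i, 0 ≤ b i)
    (hAb : ∀ i, ∀ j ∈ Jp, A i j ≤ b i) :
    ∃ (k : ℕ) (a : Fin k → Fin n → ℝ) (β : Fin k → ℝ),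
      (∀ i : Fin k, (∀ j ∈ Jp, 0 ≤ a i j) ∧ (∀ j ∈ Jn, a i j ≤ 0)) ∧
      convexHull ℝ {x ∈ signPatternPoly A b Jp | ∀ j, ∃ z : ℤ, x j = (z : ℝ)} =
        {x : Fin n → ℝ | (∀ j, 0 ≤ x j) ∧ ∀ i : Fin k, ∑ j, a i j * x j ≤ β i} :=
  signPattern_integerHull_is_signPattern_general Jp Jn hdisj A b hA hb
end
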